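/- arXiv:1804.05908 — 9 statements merged into one kernel-verified Lean document; each statement's English description precedes it below -/
import Mathlib

section
/- Let M_n(x) = Σ_{i=0}^n C(n,i)^2 x^{2i} and i_x = ⌊n x/(x+1)⌋. There exists N such that for all n ≥ N and all real x with (log n)/(6n) ≤ x ≤ 1, one has C(n, i_x)^2 x^{2 i_x} ≤ M_n(x) ≤ 3 i_x^{3/4} C(n, i_x)^2 x^{2 i_x}. -/
/-!
Write `t j = C(n,j)^2 x^(2j)`, so that `t (j+1) (j+1)^2 = t j ((n-j) x)^2`. The floor defining
`i = i_x` gives `i ≤ (n-i) x ≤ i + 2`, hence `t` increases up to `i`, decreases from `i + 1`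
on, and `t (i+1) ≤ 2 t i`. With `m = ⌊√i⌋`, the `2m + 1` terms with `|j - i| ≤ m` are each at
most `2 t i`; beyond that window `t` decays geometrically, with ratio `(i - m)/i` to the left
and `(i + 2)/(i + m + 1)` to the right, so each tail is `O(√i) t i` too. Altogether
`M_n(x) ≤ 9 √i t i ≤ 3 i^(3/4) t i` once `i ≥ 196`, and `x ≥ log n / (6n)` forces
`i > log n / 12 - 1`, which is that large for large `n`.
-/

open Real

/-- `M_n(x) = Σ_{i=0}^n C(n,i)^2 x^{2i}`. -/
noncomputable def Mpoly (n : ℕ) (x : ℝ) : ℝ :=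
  ∑ i ∈ Finset.range (n + 1), (n.choose i : ℝ) ^ 2 * x ^ (2 * i)

/-- `i_x = ⌊n x/(x+1)⌋`. -/
noncomputable def idx (n : ℕ) (x : ℝ) : ℕ := ⌊(n : ℝ) * x / (x + 1)⌋₊

open Finset

section GeometricDecay

variable {f : ℕ → ℝ} {a b : ℝ}

lemma sum_range_le_of_mul_le_mul_succ (hf : ∀ j, 0 ≤ f j) (ha : 0 ≤ a) (hab : a < b) {K : ℕ}
    (h : ∀ j < K, b * f j ≤ a * f (j + 1)) :
    ∑ j ∈ range K, f j ≤ a / (b - a) * f K := by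
  have hba : 0 < b - a := sub_pos.mpr hab
  induction K with
  | zero => simpa using mul_nonneg (div_nonneg ha hba.le) (hf 0)
  | succ K ih =>
    have hK := h K K.lt_succ_self
    calc ∑ j ∈ range (K + 1), f j ≤ a / (b - a) * f K + f K := by
          rw [sum_range_succ]
          exact add_le_add_left (ih fun j hj => h j (by omega)) _
      _ = (b * f K) / (b - a) := by field_simp; ring
      _ ≤ (a * f (K + 1)) / (b - a) := by gcongr
      _ = a / (b - a) * f (K + 1) := by ring

lemma sum_Ico_le_of_mul_succ_le_mul (hf : ∀ j, 0 ≤ f j) (ha : 0 ≤ a) (hab : a < b) {k : ℕ}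
    (h : ∀ j ≥ k, b * f (j + 1) ≤ a * f j) (l : ℕ) :
    ∑ j ∈ Ico (k + 1) l, f j ≤ a / (b - a) * f k := by
  have hba : 0 < b - a := sub_pos.mpr hab
  rw [sum_Ico_eq_sum_range]
  generalize l - (k + 1) = L
  induction L generalizing k with
  | zero => simpa using mul_nonneg (div_nonneg ha hba.le) (hf k)
  | succ L ih =>
    have hk := h k le_rfl
    calc ∑ j ∈ range (L + 1), f (k + 1 + j)
        = ∑ j ∈ range L, f (k + 1 + 1 + j) + f (k + 1) := by
          rw [sum_range_succ']; simp only [add_assoc, add_comm 1]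
      _ ≤ a / (b - a) * f (k + 1) + f (k + 1) :=
          add_le_add_left (ih fun j hj => h j (by omega)) _
      _ = (b * f (k + 1)) / (b - a) := by field_simp; ring
      _ ≤ (a * f k) / (b - a) := by gcongr
      _ = a / (b - a) * f k := by ring

end GeometricDecay

noncomputable def Mterm (n : ℕ) (x : ℝ) (j : ℕ) : ℝ := (n.choose j : ℝ) ^ 2 * x ^ (2 * j)

lemma Mpoly_eq_sum_Mterm (n : ℕ) (x : ℝ) :
    Mpoly n x = ∑ j ∈ range (n + 1), Mterm n x j := rfl

namespace Mterm

variable {n i j m : ℕ} {x : ℝ}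

lemma nonneg : 0 ≤ Mterm n x j := by unfold Mterm; rw [pow_mul]; positivity

lemma succ_mul_sq (n : ℕ) (x : ℝ) (j : ℕ) :
    Mterm n x (j + 1) * ((j : ℝ) + 1) ^ 2 = Mterm n x j * (((n : ℝ) - j) * x) ^ 2 := by
  have hchoose : (n.choose (j + 1) : ℝ) * ((j : ℝ) + 1) = n.choose j * ((n : ℝ) - j) := by
    rcases le_or_gt j n with hjn | hnj
    · rw [← Nat.cast_sub hjn]
      exact_mod_cast Nat.choose_succ_right_eq n j
    · simp [Nat.choose_eq_zero_of_lt hnj, Nat.choose_eq_zero_of_lt (hnj.trans j.lt_succ_self)]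
  unfold Mterm
  linear_combination (x ^ (2 * j) * x ^ 2 * ((n.choose (j + 1) : ℝ) * ((j : ℝ) + 1)
    + n.choose j * ((n : ℝ) - j))) * hchoose

lemma eq_zero (h : n < j) : Mterm n x j = 0 := by simp [Mterm, Nat.choose_eq_zero_of_lt h]

lemma mul_sq_le_succ_mul_sq (hx : 0 ≤ x) (hlo : (i : ℝ) ≤ (n - i) * x) (hj : j ≤ i) :
    Mterm n x j * (i : ℝ) ^ 2 ≤ Mterm n x (j + 1) * ((j : ℝ) + 1) ^ 2 := by
  have hji : (j : ℝ) ≤ i := by exact_mod_cast hj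
  have : (i : ℝ) ≤ (n - j) * x := hlo.trans (by gcongr)
  rw [succ_mul_sq]
  gcongr
  exact nonneg

lemma succ_mul_sq_le_mul_sq (hx : 0 ≤ x) (hhi : (n - i) * x ≤ (i : ℝ) + 2) (hj : i ≤ j) :
    Mterm n x (j + 1) * ((j : ℝ) + 1) ^ 2 ≤ Mterm n x j * ((i : ℝ) + 2) ^ 2 := by
  rcases le_or_gt j n with hjn | hnj
  · have hij : (i : ℝ) ≤ j := by exact_mod_cast hj
    have hjn' : (j : ℝ) ≤ n := by exact_mod_cast hjn
    have : 0 ≤ ((n : ℝ) - j) * x := mul_nonneg (sub_nonneg.mpr hjn') hx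
    rw [succ_mul_sq]
    gcongr
    · exact nonneg
    · exact (by gcongr : ((n : ℝ) - j) * x ≤ (n - i) * x).trans hhi
  · simp [succ_mul_sq, eq_zero hnj]

lemma le_succ (hx : 0 ≤ x) (hlo : (i : ℝ) ≤ (n - i) * x) (hj : j < i) :
    Mterm n x j ≤ Mterm n x (j + 1) := by
  have hi : (0 : ℝ) < i := by exact_mod_cast hj.pos
  have hj1 : (j : ℝ) + 1 ≤ i := by exact_mod_cast hj
  have := mul_sq_le_succ_mul_sq hx hlo hj.le
  have : Mterm n x (j + 1) * ((j : ℝ) + 1) ^ 2 ≤ Mterm n x (j + 1) * (i : ℝ) ^ 2 := by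
    gcongr; exact nonneg
  exact le_of_mul_le_mul_right (a := (i : ℝ) ^ 2) (by linarith) (by positivity)

lemma mul_le_mul_succ (hx : 0 ≤ x) (hlo : (i : ℝ) ≤ (n - i) * x) (hj : j + m < i) :
    (i : ℝ) * Mterm n x j ≤ (i - m) * Mterm n x (j + 1) := by
  have hi : (0 : ℝ) < i := by exact_mod_cast hj.pos
  have hjm : (j : ℝ) + 1 ≤ i - m := by
    rw [le_sub_iff_add_le]; norm_cast; omega
  have := mul_sq_le_succ_mul_sq hx hlo (j := j) (by omega)
  have : Mterm n x (j + 1) * ((j : ℝ) + 1) ^ 2 ≤ Mterm n x (j + 1) * ((i - m) * i) := by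
    gcongr
    · exact nonneg
    · nlinarith
  refine le_of_mul_le_mul_left ?_ hi
  calc (i : ℝ) * (i * Mterm n x j) = Mterm n x j * (i : ℝ) ^ 2 := by ring
    _ ≤ Mterm n x (j + 1) * ((i - m) * i) := by linarith
    _ = i * ((i - m) * Mterm n x (j + 1)) := by ring

lemma succ_le (hx : 0 ≤ x) (hhi : (n - i) * x ≤ (i : ℝ) + 2) (hj : i < j) :
    Mterm n x (j + 1) ≤ Mterm n x j := by
  have hj2 : (i : ℝ) + 2 ≤ j + 1 := by norm_cast; omega
  have := succ_mul_sq_le_mul_sq hx hhi hj.le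
  have : Mterm n x j * ((i : ℝ) + 2) ^ 2 ≤ Mterm n x j * ((j : ℝ) + 1) ^ 2 := by
    gcongr; exact nonneg
  exact le_of_mul_le_mul_right (a := ((j : ℝ) + 1) ^ 2) (by linarith) (by positivity)

lemma succ_peak_le_two_mul (hx : 0 ≤ x) (hhi : (n - i) * x ≤ (i : ℝ) + 2) (hi : 2 ≤ i) :
    Mterm n x (i + 1) ≤ 2 * Mterm n x i := by
  have hi' : (2 : ℝ) ≤ i := by exact_mod_cast hi
  have := succ_mul_sq_le_mul_sq hx hhi le_rfl
  have : Mterm n x i * ((i : ℝ) + 2) ^ 2 ≤ 2 * Mterm n x i * ((i : ℝ) + 1) ^ 2 := by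
    rw [mul_comm 2, mul_assoc]; gcongr
    · exact nonneg
    · nlinarith
  exact le_of_mul_le_mul_right (a := ((i : ℝ) + 1) ^ 2) (by linarith) (by positivity)

lemma mul_succ_le_mul (hx : 0 ≤ x) (hhi : (n - i) * x ≤ (i : ℝ) + 2) (hm : 1 ≤ m)
    (hj : i + m ≤ j) : ((i : ℝ) + m + 1) * Mterm n x (j + 1) ≤ (i + 2) * Mterm n x j := by
  have him : (i : ℝ) + m + 1 ≤ j + 1 := by norm_cast; omega
  have hm' : (1 : ℝ) ≤ m := by exact_mod_cast hm
  have := succ_mul_sq_le_mul_sq hx hhi (by omega : i ≤ j)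
  have : Mterm n x (j + 1) * ((i : ℝ) + m + 1) ^ 2
      ≤ Mterm n x (j + 1) * ((j : ℝ) + 1) ^ 2 := by
    gcongr; exact nonneg
  have : Mterm n x j * ((i : ℝ) + 2) ^ 2 ≤ ((i : ℝ) + m + 1) * ((i + 2) * Mterm n x j) := by
    calc Mterm n x j * ((i : ℝ) + 2) ^ 2 = ((i : ℝ) + 2) * ((i + 2) * Mterm n x j) := by ring
      _ ≤ ((i : ℝ) + m + 1) * ((i + 2) * Mterm n x j) :=
        mul_le_mul_of_nonneg_right (by linarith) (mul_nonneg (by positivity) nonneg)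
  refine le_of_mul_le_mul_left (a := (i : ℝ) + m + 1) ?_ (by positivity)
  linarith

lemma le_peak (hx : 0 ≤ x) (hlo : (i : ℝ) ≤ (n - i) * x) (hj : j ≤ i) :
    Mterm n x j ≤ Mterm n x i :=
  monotoneOn_of_le_add_one (f := Mterm n x) Set.ordConnected_Iic
    (fun _ _ _ hk1 => le_succ hx hlo (Set.mem_Iic.mp hk1)) hj Set.self_mem_Iic hj

lemma le_two_mul_peak (hx : 0 ≤ x) (hlo : (i : ℝ) ≤ (n - i) * x)
    (hhi : (n - i) * x ≤ (i : ℝ) + 2) (hi : 2 ≤ i) (j : ℕ) :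
    Mterm n x j ≤ 2 * Mterm n x i := by
  rcases le_or_gt j i with hji | hij
  · linarith [le_peak hx hlo hji, (nonneg : 0 ≤ Mterm n x i)]
  · calc Mterm n x j ≤ Mterm n x (i + 1) :=
          antitoneOn_nat_Ici_of_succ_le (f := Mterm n x)
            (fun _ hk => succ_le hx hhi hk) (le_refl (i + 1)) hij hij
      _ ≤ 2 * Mterm n x i := succ_peak_le_two_mul hx hhi hi

end Mterm

theorem Mpoly_le_of_peak {n i m : ℕ} {x : ℝ} (hx : 0 ≤ x) (hlo : (i : ℝ) ≤ (n - i) * x)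
    (hhi : (n - i) * x ≤ (i : ℝ) + 2) (hm : 2 ≤ m) (hmi : m ≤ i) (hin : i + m ≤ n) :
    Mpoly n x ≤ ((i - m) / m + (2 * m + 1) + (i + 2) / (m - 1)) * (2 * Mterm n x i) := by
  have hmax := Mterm.le_two_mul_peak hx hlo hhi (hm.trans hmi)
  have hm' : (2 : ℝ) ≤ m := by exact_mod_cast hm
  have hmi' : (m : ℝ) ≤ i := by exact_mod_cast hmi
  have hhead : ∑ j ∈ range (i - m), Mterm n x j ≤ (i - m) / m * (2 * Mterm n x i) := by
    have hgeom := sum_range_le_of_mul_le_mul_succ (f := Mterm n x) (K := i - m)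
      (fun _ => Mterm.nonneg) (sub_nonneg.mpr hmi') (by linarith)
      fun j hj => Mterm.mul_le_mul_succ (m := m) hx hlo (by omega)
    rw [sub_sub_cancel] at hgeom
    exact hgeom.trans (by gcongr; exact hmax _)
  have hmid : ∑ j ∈ Ico (i - m) (i + m + 1), Mterm n x j
      ≤ (2 * m + 1) * (2 * Mterm n x i) := by
    calc ∑ j ∈ Ico (i - m) (i + m + 1), Mterm n x j
        ≤ ∑ _j ∈ Ico (i - m) (i + m + 1), 2 * Mterm n x i := sum_le_sum fun j _ => hmax j
      _ = (2 * m + 1) * (2 * Mterm n x i) := by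
        rw [sum_const, Nat.card_Ico, nsmul_eq_mul, show i + m + 1 - (i - m) = 2 * m + 1 by omega]
        push_cast; ring
  have htail : ∑ j ∈ Ico (i + m + 1) (n + 1), Mterm n x j
      ≤ (i + 2) / (m - 1) * (2 * Mterm n x i) := by
    have hgeom := sum_Ico_le_of_mul_succ_le_mul (f := Mterm n x) (k := i + m)
      (a := (i : ℝ) + 2) (b := (i : ℝ) + m + 1) (fun _ => Mterm.nonneg) (by positivity)
      (by linarith) (fun j hj => Mterm.mul_succ_le_mul hx hhi (by omega) hj) (n + 1)
    rw [show (i : ℝ) + m + 1 - (i + 2) = m - 1 by ring] at hgeom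
    have : 0 ≤ ((i : ℝ) + 2) / (m - 1) := div_nonneg (by positivity) (by linarith)
    exact hgeom.trans (by gcongr; exact hmax _)
  rw [Mpoly_eq_sum_Mterm, ← sum_range_add_sum_Ico _ (by omega : i + m + 1 ≤ n + 1),
    ← sum_range_add_sum_Ico _ (by omega : i - m ≤ i + m + 1)]
  linarith

lemma window_factor_le {i m : ℝ} (hm : 14 ≤ m) (hi : i < (m + 1) ^ 2) :
    (i - m) / m + (2 * m + 1) + (i + 2) / (m - 1) ≤ 9 / 2 * m := by
  have hhead : (i - m) / m ≤ m + 2 := by rw [div_le_iff₀ (by linarith)]; nlinarith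
  have htail : (i + 2) / (m - 1) ≤ m + 4 := by rw [div_le_iff₀ (by linarith)]; nlinarith
  linarith

theorem Mpoly_le_nine_mul_sqrt {n i : ℕ} {x : ℝ} (hx : 0 ≤ x) (hlo : (i : ℝ) ≤ (n - i) * x)
    (hhi : (n - i) * x ≤ (i : ℝ) + 2) (hi : 196 ≤ i) (hin : 2 * i ≤ n) :
    Mpoly n x ≤ 9 * i.sqrt * Mterm n x i := by
  have hm : 14 ≤ i.sqrt := Nat.le_sqrt.mpr hi
  have hsq : (i : ℝ) < (i.sqrt + 1) ^ 2 := by exact_mod_cast Nat.lt_succ_sqrt' i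
  calc Mpoly n x ≤ _ := Mpoly_le_of_peak hx hlo hhi (by omega) i.sqrt_le_self
        (by linarith [i.sqrt_le_self])
    _ ≤ 9 / 2 * i.sqrt * (2 * Mterm n x i) := by
        gcongr
        · exact mul_nonneg zero_le_two Mterm.nonneg
        · exact window_factor_le (by exact_mod_cast hm) hsq
    _ = 9 * i.sqrt * Mterm n x i := by ring

lemma three_mul_sqrt_le_rpow {t : ℝ} (ht : 81 ≤ t) : 3 * √t ≤ t ^ (3 / 4 : ℝ) := by
  have h3 : (3 : ℝ) ≤ t ^ (1 / 4 : ℝ) := by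
    calc (3 : ℝ) = (81 : ℝ) ^ (1 / 4 : ℝ) := by
          rw [show (81 : ℝ) = 3 ^ (4 : ℝ) by norm_num, ← rpow_mul (by norm_num)]; norm_num
      _ ≤ t ^ (1 / 4 : ℝ) := by gcongr
  rw [sqrt_eq_rpow, show (3 / 4 : ℝ) = 1 / 4 + 1 / 2 by norm_num, rpow_add (by linarith)]
  gcongr

section Idx

variable {n : ℕ} {x : ℝ}

lemma idx_le_mul (hx : 0 ≤ x) : (idx n x : ℝ) ≤ (n - idx n x) * x := by
  have := Nat.floor_le (a := (n : ℝ) * x / (x + 1)) (by positivity)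
  rw [le_div_iff₀ (by positivity)] at this
  unfold idx; linarith

lemma mul_le_idx_add_two (hx : 0 ≤ x) (hx1 : x ≤ 1) :
    (n - idx n x) * x ≤ (idx n x : ℝ) + 2 := by
  have := Nat.lt_floor_add_one ((n : ℝ) * x / (x + 1))
  rw [div_lt_iff₀ (by positivity)] at this
  unfold idx; nlinarith

lemma log_div_twelve_lt_idx_add_one (hn : 1 ≤ n) (hx : Real.log n / (6 * n) ≤ x)
    (hx1 : x ≤ 1) :
    Real.log n / 12 < idx n x + 1 := by
  have hn' : (0 : ℝ) < n := by exact_mod_cast hn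
  have hlog : 0 ≤ Real.log n := Real.log_nonneg (by exact_mod_cast hn)
  have hnx : Real.log n / 6 ≤ n * x := by
    rw [div_mul_eq_div_div, div_le_iff₀ hn'] at hx; linarith
  have hx0 : 0 ≤ x := (div_nonneg hlog (by positivity)).trans hx
  calc Real.log n / 12 ≤ n * x / 2 := by linarith
    _ ≤ n * x / (x + 1) := by gcongr; linarith
    _ < idx n x + 1 := Nat.lt_floor_add_one _

end Idx

lemma two_mul_le_of_le_mul {n i : ℕ} {x : ℝ} (hx : 0 ≤ x) (hx1 : x ≤ 1)
    (hlo : (i : ℝ) ≤ (n - i) * x) : 2 * i ≤ n := by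
  have : (2 * i : ℝ) ≤ n := by nlinarith
  exact_mod_cast this

/-- for `n` large and `(log n)/(6n) ≤ x ≤ 1`,
`C(n,i_x)^2 x^{2 i_x} ≤ M_n(x) ≤ 3 i_x^{3/4} C(n,i_x)^2 x^{2 i_x}`. -/
theorem stmt_1 :
    ∃ N : ℕ, ∀ n : ℕ, N ≤ n → ∀ x : ℝ,
      Real.log n / (6 * n) ≤ x → x ≤ 1 →
      (n.choose (idx n x) : ℝ) ^ 2 * x ^ (2 * idx n x) ≤ Mpoly n x ∧
        Mpoly n x ≤
          3 * (idx n x : ℝ) ^ ((3 : ℝ) / 4) *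
            ((n.choose (idx n x) : ℝ) ^ 2 * x ^ (2 * idx n x)) := by
  refine ⟨⌈exp 2352⌉₊, fun n hN x hlog hx1 => ?_⟩
  have hn : exp 2352 ≤ n := Nat.ceil_le.mp hN
  have hlogn : 2352 ≤ Real.log n := (le_log_iff_exp_le (by linarith [exp_pos 2352])).mpr hn
  have hn1 : 1 ≤ n := by exact_mod_cast (one_le_exp (by norm_num)).trans hn
  have hx : 0 ≤ x := (div_nonneg (by linarith) (by positivity)).trans hlog
  have hlo := idx_le_mul (n := n) hx
  have hhi := mul_le_idx_add_two (n := n) hx hx1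
  have hin := two_mul_le_of_le_mul hx hx1 hlo
  have hi : 196 ≤ idx n x := by
    have := log_div_twelve_lt_idx_add_one hn1 hlog hx1
    exact_mod_cast (by linarith : (195 : ℝ) < idx n x)
  change Mterm n x (idx n x) ≤ Mpoly n x ∧ Mpoly n x ≤ 3 * _ * Mterm n x (idx n x)
  refine ⟨?_, (Mpoly_le_nine_mul_sqrt hx hlo hhi hi hin).trans ?_⟩
  · rw [Mpoly_eq_sum_Mterm]
    exact single_le_sum (f := Mterm n x) (fun _ _ => Mterm.nonneg) (mem_range.mpr (by omega))
  · have := three_mul_sqrt_le_rpow (t := idx n x) (by exact_mod_cast hi.trans' (by norm_num))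
    have := Real.nat_sqrt_le_real_sqrt (a := idx n x)
    exact mul_le_mul_of_nonneg_right (by linarith) Mterm.nonneg
end

section
/- Let μ_n = ⊗_{i=0}^n N(0,1) be the standard Gaussian product measure on ℝ^{n+1}. For every n and every real c > 0, μ_n({a : Σ_{i=0}^n C(n,i) a_i x^i > 0 for all x > c}) = μ_n({a : Σ_{i=0}^n C(n,i) a_i x^i > 0 for all x ∈ (0, 1/c)}). -/
/-! Reversing the coefficients, `a ↦ a ∘ Fin.rev`, preserves the product measure, and since
`C(n, i) = C(n, n - i)` it turns `p_a(x)` into `xⁿ p_a(1/x)`; the substitution `x ↦ 1/x` maps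
`(c, ∞)` onto `(0, 1/c)`. -/

open MeasureTheory ProbabilityTheory

lemma MeasureTheory.Measure.pi_preimage_comp_perm {ι α : Type*} [Fintype ι] [MeasurableSpace α]
    (μ : Measure α) [SigmaFinite μ] (σ : Equiv.Perm ι) (s : Set (ι → α)) :
    Measure.pi (fun _ : ι => μ) ((fun a => a ∘ σ) ⁻¹' s) = Measure.pi (fun _ : ι => μ) s := by
  have h := measurePreserving_piCongrLeft (fun _ : ι => μ) σ.symm
  have hcomp : ⇑(MeasurableEquiv.piCongrLeft (fun _ : ι => α) σ.symm) = fun a => a ∘ σ := by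
    ext a i
    simp [MeasurableEquiv.coe_piCongrLeft, Equiv.piCongrLeft_apply_eq_cast]
  rw [← hcomp]
  exact h.measure_preimage_equiv s

lemma sum_choose_mul_rev_mul_pow {K : Type*} [Field K] (n : ℕ) (a : Fin (n + 1) → K) {x : K}
    (hx : x ≠ 0) :
    ∑ i : Fin (n + 1), (n.choose i : K) * a i.rev * x ^ (i : ℕ) =
      x ^ n * ∑ i : Fin (n + 1), (n.choose i : K) * a i * x⁻¹ ^ (i : ℕ) := by
  rw [Finset.mul_sum, ← Equiv.sum_comp Fin.revPerm]
  refine Finset.sum_congr rfl fun i _ => ?_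
  have hle : (i : ℕ) ≤ n := Fin.is_le i
  have hpow : x ^ n = x ^ (n - i : ℕ) * x ^ (i : ℕ) := by rw [← pow_add, Nat.sub_add_cancel hle]
  simp only [Fin.revPerm_apply, Fin.rev_rev, Fin.val_rev, inv_pow]
  rw [show n + 1 - (i + 1) = n - i by omega, Nat.choose_symm hle, hpow]
  field_simp

lemma forall_gt_iff_forall_inv_lt {c : ℝ} (hc : 0 < c) (p : ℝ → Prop) :
    (∀ x, c < x → p x) ↔ ∀ x, 0 < x → x < 1 / c → p x⁻¹ := by
  constructor
  · intro h x hx hxc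
    exact h x⁻¹ (by rwa [lt_inv_comm₀ hc hx, ← one_div])
  · intro h x hcx
    have hx : 0 < x := hc.trans hcx
    simpa using h x⁻¹ (inv_pos.mpr hx) (by rwa [one_div, inv_lt_inv₀ hx hc])

/-- with `μ_n = ⊗_{i=0}^n N(0,1)` on `ℝ^{n+1}`, for every `c > 0`,
`μ_n(Σ C(n,i) a_i x^i > 0 for all x > c) = μ_n(Σ C(n,i) a_i x^i > 0 for all x ∈ (0, 1/c))`. -/
theorem stmt_8 (n : ℕ) (c : ℝ) (hc : 0 < c) :
    (Measure.pi fun _ : Fin (n + 1) => gaussianReal 0 1)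
        {a : Fin (n + 1) → ℝ | ∀ x : ℝ, c < x →
          0 < ∑ i : Fin (n + 1), (n.choose i : ℝ) * a i * x ^ (i : ℕ)} =
      (Measure.pi fun _ : Fin (n + 1) => gaussianReal 0 1)
        {a : Fin (n + 1) → ℝ | ∀ x : ℝ, 0 < x → x < 1 / c →
          0 < ∑ i : Fin (n + 1), (n.choose i : ℝ) * a i * x ^ (i : ℕ)} := by
  rw [← Measure.pi_preimage_comp_perm _ Fin.revPerm]
  congr 1
  ext a
  simp only [Set.mem_ofPred_eq, Set.mem_preimage, Function.comp_apply, Fin.revPerm_apply]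
  rw [forall_gt_iff_forall_inv_lt hc]
  refine forall₂_congr fun x hx => forall_congr' fun _ => ?_
  rw [sum_choose_mul_rev_mul_pow n a (inv_ne_zero hx.ne'), inv_inv]
  exact mul_pos_iff_of_pos_left (pow_pos (inv_pos.mpr hx) n)
end

section
/- Let f_n(x) = Σ_{i=0}^n C(n,i) a_i x^i with a_0, …, a_n i.i.d. standard normal, let Φ denote the standard normal cumulative distribution function, and set ξ_n = (log n) · (1 + (log n)/(6n))^n. Then for all n ≥ 2, P(f_n(x) > 0 for all x ∈ (0, (log n)/(6n))) ≥ (1 − Φ(ξ_n)) · (2Φ(log n) − 1)^n. -/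
open MeasureTheory ProbabilityTheory Real

/-- `Φ`, the standard normal cumulative distribution function. -/
noncomputable def stdNormalCDF (x : ℝ) : ℝ :=
  ((ProbabilityTheory.gaussianReal 0 1) (Set.Iic x)).toReal

/-!
Write `t = log n` and `L = t / (6n)`, so `ξ_n = t (1 + L)^n`. On the box
`{a₀ > ξ_n, |aᵢ| < t for i ≥ 1}`, which has probability `(1 - Φ(ξ_n)) (2Φ(t) - 1)^n`, the constant
term dominates: for `0 < x < L` the binomial theorem bounds the other terms below by
`-t ((1 + x)^n - 1) > t - ξ_n`, so `f_n(x) > t > 0`.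
-/

open Set
open scoped NNReal

namespace ProbabilityTheory

theorem gaussianReal_real_Iic_neg (v : ℝ≥0) (t : ℝ) :
    (gaussianReal 0 v).real (Iic (-t)) = (gaussianReal 0 v).real (Ici t) := by
  conv_lhs => rw [← neg_zero, ← gaussianReal_map_neg]
  rw [map_measureReal_apply measurable_neg measurableSet_Iic]
  congr 1
  ext x
  simp

end ProbabilityTheory

theorem one_sub_stdNormalCDF (t : ℝ) : 1 - stdNormalCDF t = (gaussianReal 0 1).real (Ioi t) := by
  rw [stdNormalCDF, ← measureReal_def, ← compl_Iic, probReal_compl_eq_one_sub measurableSet_Iic]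

theorem two_mul_stdNormalCDF_sub_one {t : ℝ} (ht : 0 ≤ t) :
    2 * stdNormalCDF t - 1 = (gaussianReal 0 1).real (Ioo (-t) t) := by
  have := nullSingletonClass_gaussianReal (μ := 0) one_ne_zero
  have hIoc : Ioc (-t) t = Iic t \ Iic (-t) := by
    ext
    simp [and_comm]
  rw [measureReal_congr Ioo_ae_eq_Ioc, hIoc,
    measureReal_sdiff (Iic_subset_Iic.2 (by linarith)) measurableSet_Iic,
    gaussianReal_real_Iic_neg, measureReal_congr Ioi_ae_eq_Ici.symm, ← one_sub_stdNormalCDF,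
    stdNormalCDF, measureReal_def]
  ring

theorem MeasureTheory.Measure.pi_univ_pi_cons {α : Type*} [MeasurableSpace α] (μ : Measure α)
    [SigmaFinite μ] (n : ℕ) (A B : Set α) :
    Measure.pi (fun _ : Fin (n + 1) => μ) (univ.pi (Fin.cons A fun _ => B)) = μ A * μ B ^ n := by
  rw [Measure.pi_pi, Fin.prod_univ_succ]
  simp

theorem sum_choose_succ_mul_pow_succ (n : ℕ) (x : ℝ) :
    ∑ i : Fin n, (n.choose (i + 1) : ℝ) * x ^ ((i : ℕ) + 1) = (1 + x) ^ n - 1 := by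
  rw [add_comm, add_pow, Finset.sum_range_succ', Fin.sum_univ_eq_sum_range
    (fun i => (n.choose (i + 1) : ℝ) * x ^ (i + 1))]
  simp [mul_comm]

theorem sub_mul_one_add_pow_sub_one_le_sum_choose {n : ℕ} {t x : ℝ} (a : Fin (n + 1) → ℝ)
    (hx : 0 ≤ x) (ha : ∀ i : Fin n, |a i.succ| ≤ t) :
    a 0 - t * ((1 + x) ^ n - 1) ≤ ∑ i : Fin (n + 1), (n.choose i : ℝ) * a i * x ^ (i : ℕ) := by
  have hterm (i : Fin n) : -((n.choose (i + 1) : ℝ) * x ^ ((i : ℕ) + 1) * t) ≤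
      (n.choose (i + 1) : ℝ) * a i.succ * x ^ ((i : ℕ) + 1) := by
    have hc : 0 ≤ (n.choose (i + 1) : ℝ) * x ^ ((i : ℕ) + 1) := by positivity
    nlinarith [neg_abs_le (a i.succ), ha i]
  rw [Fin.sum_univ_succ, ← sum_choose_succ_mul_pow_succ, mul_comm t, Finset.sum_mul,
    sub_eq_add_neg, ← Finset.sum_neg_distrib]
  simpa using Finset.sum_le_sum fun i _ => hterm i

/-- with `ξ_n = (log n)(1 + (log n)/(6n))^n`, for all `n ≥ 2`,
`P(f_n(x) > 0 ∀ x ∈ (0, (log n)/(6n))) ≥ (1 - Φ(ξ_n)) (2Φ(log n) - 1)^n`. -/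
theorem stmt_9 (n : ℕ) (hn : 2 ≤ n) :
    (1 - stdNormalCDF (Real.log n * (1 + Real.log n / (6 * n)) ^ n)) *
        (2 * stdNormalCDF (Real.log n) - 1) ^ n ≤
      ((Measure.pi fun _ : Fin (n + 1) => gaussianReal 0 1)
        {a : Fin (n + 1) → ℝ | ∀ x : ℝ, 0 < x → x < Real.log n / (6 * n) →
          0 < ∑ i : Fin (n + 1), (n.choose i : ℝ) * a i * x ^ (i : ℕ)}).toReal := by
  set t := Real.log n
  have ht : 0 < t := Real.log_pos (by exact_mod_cast hn)
  set ξ := t * (1 + t / (6 * n)) ^ n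
  have hbox : univ.pi (Fin.cons (Ioi ξ) fun _ => Ioo (-t) t) ⊆
      {a : Fin (n + 1) → ℝ | ∀ x : ℝ, 0 < x → x < t / (6 * n) →
        0 < ∑ i : Fin (n + 1), (n.choose i : ℝ) * a i * x ^ (i : ℕ)} := by
    intro a ha x hx hxL
    simp only [mem_univ_pi, Fin.forall_fin_succ, Fin.cons_zero, Fin.cons_succ, mem_Ioi,
      mem_Ioo] at ha
    obtain ⟨ha0, hai⟩ := ha
    refine lt_of_lt_of_le ?_ (sub_mul_one_add_pow_sub_one_le_sum_choose a hx.le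
      fun i => abs_le.2 ⟨(hai i).1.le, (hai i).2.le⟩)
    have hpow : (1 + x) ^ n ≤ (1 + t / (6 * n)) ^ n :=
      pow_le_pow_left₀ (by linarith) (by linarith) n
    nlinarith
  rw [one_sub_stdNormalCDF, two_mul_stdNormalCDF_sub_one ht.le]
  calc
    _ = (Measure.pi fun _ : Fin (n + 1) => gaussianReal 0 1).real
        (univ.pi (Fin.cons (Ioi ξ) fun _ => Ioo (-t) t)) := by
      simp only [measureReal_def, Measure.pi_univ_pi_cons, ENNReal.toReal_mul,
        ENNReal.toReal_pow]
    _ ≤ _ := measureReal_mono hbox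
end

section
/- Let f_n(x) = Σ_{i=0}^n C(n,i) a_i x^i with a_0, …, a_n i.i.d. standard normal. Then liminf_{n → ∞} (1/√n) log P(f_n(x) > 0 for all x ∈ (0, (log n)/(6n))) ≥ 0. -/
/-!
On `(0, log n / (6n))` the binomial weights sum to `(1 + x)^n ≤ e^{nx} ≤ n^{1/6}`, so the event
contains the box `a₀ > t n^{1/6}`, `aᵢ > -t` (`i ≥ 1`): there `a₀` outweighs all other terms.
With `t = 2 √(log n)` each constraint `aᵢ > -t` fails with probability at most `e^{-t²/2} = n⁻²`,
so by Bernoulli's inequality the last `n` constraints hold together with probability at least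
`1/2`, while `P(a₀ > M) ≥ φ(M + 1)` costs only `O(M²) = O(n^{1/3} log n) = o(√n)` in the
logarithm. As `log P ≤ 0`, `(log P) / √n → 0`.
-/

open MeasureTheory ProbabilityTheory Filter Real Topology

lemma sum_choose_mul_pow_pos {n : ℕ} {x t : ℝ} {a : Fin (n + 1) → ℝ} (hx : 0 ≤ x)
    (h0 : t * ((1 + x) ^ n - 1) < a 0) (hi : ∀ i : Fin n, -t ≤ a i.succ) :
    0 < ∑ i : Fin (n + 1), (n.choose i : ℝ) * a i * x ^ (i : ℕ) := by
  have hbin : ∑ i : Fin (n + 1), (n.choose i : ℝ) * x ^ (i : ℕ) = (1 + x) ^ n := by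
    rw [Fin.sum_univ_eq_sum_range (fun i => (n.choose i : ℝ) * x ^ i), add_comm 1 x, add_pow]
    simp only [one_pow, mul_one, mul_comm]
  have htail : -t * ((1 + x) ^ n - 1) ≤
      ∑ i : Fin n, (n.choose i.succ : ℝ) * a i.succ * x ^ (i.succ : ℕ) := by
    rw [← hbin, Fin.sum_univ_succ]
    simp only [Fin.val_zero, Nat.choose_zero_right, Nat.cast_one, pow_zero, mul_one,
      add_sub_cancel_left, Finset.mul_sum]
    refine Finset.sum_le_sum fun i _ => ?_
    have : (0 : ℝ) ≤ (n.choose i.succ : ℝ) * x ^ (i.succ : ℕ) := by positivity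
    nlinarith [hi i]
  rw [Fin.sum_univ_succ]
  simp only [Fin.val_zero, Nat.choose_zero_right, Nat.cast_one, one_mul, pow_zero, mul_one]
  linarith

lemma one_add_pow_le_exp {x : ℝ} (hx : 0 ≤ x) (n : ℕ) : (1 + x) ^ n ≤ exp (n * x) := by
  rw [exp_nat_mul]
  gcongr
  linarith [add_one_le_exp x]

lemma gaussianReal_real_Iic_neg_le {t : ℝ} (ht : 0 ≤ t) :
    (gaussianReal 0 1).real (Set.Iic (-t)) ≤ exp (-t ^ 2 / 2) := by
  have h := measure_le_le_exp_mul_mgf (X := id) (μ := gaussianReal 0 1) (-t) (neg_nonpos.2 ht)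
    (integrable_exp_mul_gaussianReal (-t))
  rw [mgf_id_gaussianReal, ← exp_add] at h
  exact h.trans_eq (by congr 1; push_cast; ring)

lemma one_sub_exp_le_gaussianReal_real_Ioi_neg {t : ℝ} (ht : 0 ≤ t) :
    1 - exp (-t ^ 2 / 2) ≤ (gaussianReal 0 1).real (Set.Ioi (-t)) := by
  rw [← Set.compl_Iic, probReal_compl_eq_one_sub measurableSet_Iic]
  linarith [gaussianReal_real_Iic_neg_le ht]

lemma exp_div_le_gaussianReal_real_Ioi {M : ℝ} (hM : 0 ≤ M) :
    exp (-(M + 1) ^ 2 / 2) / √(2 * π) ≤ (gaussianReal 0 1).real (Set.Ioi M) := by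
  have hpdf : ∀ x ∈ Set.Ioc M (M + 1),
      exp (-(M + 1) ^ 2 / 2) / √(2 * π) ≤ gaussianPDFReal 0 1 x := by
    rintro x ⟨hMx, hxM⟩
    simp only [gaussianPDFReal, NNReal.coe_one, mul_one, sub_zero]
    rw [div_eq_inv_mul]
    gcongr _ * exp ?_
    nlinarith
  calc exp (-(M + 1) ^ 2 / 2) / √(2 * π)
      = ∫ _ in Set.Ioc M (M + 1), exp (-(M + 1) ^ 2 / 2) / √(2 * π) := by simp
    _ ≤ ∫ x in Set.Ioc M (M + 1), gaussianPDFReal 0 1 x :=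
      setIntegral_mono_on (integrableOn_const measure_Ioc_lt_top.ne)
        (integrable_gaussianPDFReal 0 1).integrableOn measurableSet_Ioc hpdf
    _ = (gaussianReal 0 1).real (Set.Ioc M (M + 1)) := by
      rw [measureReal_def, gaussianReal_apply_eq_integral 0 one_ne_zero, ENNReal.toReal_ofReal
        (setIntegral_nonneg measurableSet_Ioc fun x _ => gaussianPDFReal_nonneg _ _ _)]
    _ ≤ (gaussianReal 0 1).real (Set.Ioi M) := measureReal_mono Set.Ioc_subset_Ioi_self

lemma tendsto_log_mul_rpow_add_div_sqrt (a b : ℝ) :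
    Tendsto (fun y : ℝ => (a * log y * y ^ (1 / 3 : ℝ) + b) / √y) atTop (𝓝 0) := by
  have hlog : Tendsto (fun y : ℝ => log y / y ^ (1 / 6 : ℝ)) atTop (𝓝 0) :=
    (isLittleO_log_rpow_atTop (by norm_num)).tendsto_div_nhds_zero
  have hsqrt : Tendsto (fun y : ℝ => b / √y) atTop (𝓝 0) :=
    tendsto_const_nhds.div_atTop tendsto_sqrt_atTop
  have := (hlog.const_mul a).add hsqrt
  rw [mul_zero, zero_add] at this
  refine this.congr' ?_
  filter_upwards [eventually_gt_atTop 0] with y hy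
  have : √y = y ^ (1 / 3 : ℝ) * y ^ (1 / 6 : ℝ) := by
    rw [sqrt_eq_rpow, ← rpow_add hy]; norm_num
  rw [this]
  field_simp

def positiveNearZero (n : ℕ) : Set (Fin (n + 1) → ℝ) :=
  {a | ∀ x : ℝ, 0 < x → x < log n / (6 * n) →
    0 < ∑ i : Fin (n + 1), (n.choose i : ℝ) * a i * x ^ (i : ℕ)}

lemma pi_Ioi_subset_positiveNearZero (n : ℕ) {t : ℝ} (ht : 0 ≤ t) :
    Set.univ.pi (Fin.cons (Set.Ioi (t * (n : ℝ) ^ (1 / 6 : ℝ))) fun _ => Set.Ioi (-t))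
      ⊆ positiveNearZero n := by
  intro a ha x hx hxn
  have ha0 : t * (n : ℝ) ^ (1 / 6 : ℝ) < a 0 := by simpa using ha 0 (Set.mem_univ _)
  have hai (i : Fin n) : -t < a i.succ := by simpa using ha i.succ (Set.mem_univ _)
  obtain rfl | hn := n.eq_zero_or_pos
  · -- the interval is empty, as `log 0 / 0 = 0`
    simp at hxn; linarith
  replace hn : (0 : ℝ) < n := by exact_mod_cast hn
  have hnx : n * x < log n * (1 / 6) := by
    rw [lt_div_iff₀ (by positivity)] at hxn; linarith
  refine sum_choose_mul_pow_pos hx.le ?_ fun i => (hai i).le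
  calc t * ((1 + x) ^ n - 1) ≤ t * exp (n * x) := by
        gcongr; linarith [one_add_pow_le_exp hx.le n]
    _ ≤ t * (n : ℝ) ^ (1 / 6 : ℝ) := by
        rw [rpow_def_of_pos hn]; gcongr
    _ < a 0 := ha0

lemma gaussianReal_real_Ioi_mul_pow_le_pi_positiveNearZero (n : ℕ) {t : ℝ} (ht : 0 ≤ t) :
    (gaussianReal 0 1).real (Set.Ioi (t * (n : ℝ) ^ (1 / 6 : ℝ))) * (1 - exp (-t ^ 2 / 2)) ^ n
      ≤ (Measure.pi fun _ : Fin (n + 1) => gaussianReal 0 1).real (positiveNearZero n) := by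
  have hq : 0 ≤ 1 - exp (-t ^ 2 / 2) := by
    rw [sub_nonneg, exp_le_one_iff]; nlinarith
  calc _ ≤ (gaussianReal 0 1).real (Set.Ioi (t * (n : ℝ) ^ (1 / 6 : ℝ)))
        * (gaussianReal 0 1).real (Set.Ioi (-t)) ^ n := by
        gcongr; exact one_sub_exp_le_gaussianReal_real_Ioi_neg ht
    _ = (Measure.pi fun _ : Fin (n + 1) => gaussianReal 0 1).real (Set.univ.pi
          (Fin.cons (Set.Ioi (t * (n : ℝ) ^ (1 / 6 : ℝ))) fun _ => Set.Ioi (-t))) := by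
        simp [measureReal_def, Measure.pi_pi, Fin.prod_univ_succ, ENNReal.toReal_pow]
    _ ≤ _ := measureReal_mono (pi_Ioi_subset_positiveNearZero n ht)

lemma log_pi_positiveNearZero_ge {n : ℕ} (hn : 2 ≤ n) :
    -(4 * log n * (n : ℝ) ^ (1 / 3 : ℝ) + (log (2 * √(2 * π)) + 1)) ≤
      log ((Measure.pi fun _ : Fin (n + 1) => gaussianReal 0 1).real (positiveNearZero n)) := by
  have hn2 : (2 : ℝ) ≤ n := by exact_mod_cast hn
  have hlog : 0 ≤ log n := log_nonneg (by linarith)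
  set t := 2 * √(log n) with ht
  set M := t * (n : ℝ) ^ (1 / 6 : ℝ) with hM
  have htail : exp (-t ^ 2 / 2) = ((n : ℝ) ^ 2)⁻¹ := by
    rw [ht, mul_pow, sq_sqrt hlog, ← exp_log (by positivity : (0 : ℝ) < n ^ 2), ← exp_neg,
      log_pow]
    ring_nf
  have hinv : ((n : ℝ) ^ 2)⁻¹ ≤ 1 := inv_le_one_of_one_le₀ (by nlinarith)
  have hbern : 1 / 2 ≤ (1 - exp (-t ^ 2 / 2)) ^ n := by
    calc (1 / 2 : ℝ) ≤ 1 + n * -((n : ℝ) ^ 2)⁻¹ := by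
          field_simp; nlinarith
      _ ≤ _ := by
          rw [htail, sub_eq_add_neg]
          exact one_add_mul_le_pow (by linarith) n
  have hM0 : 0 ≤ M := by positivity
  have hP : exp (-(M + 1) ^ 2 / 2) / (2 * √(2 * π)) ≤
      (Measure.pi fun _ : Fin (n + 1) => gaussianReal 0 1).real (positiveNearZero n) := by
    calc exp (-(M + 1) ^ 2 / 2) / (2 * √(2 * π))
        = exp (-(M + 1) ^ 2 / 2) / √(2 * π) * (1 / 2) := by ring
      _ ≤ (gaussianReal 0 1).real (Set.Ioi M) * (1 - exp (-t ^ 2 / 2)) ^ n := by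
          gcongr
          exact exp_div_le_gaussianReal_real_Ioi hM0
      _ ≤ _ := gaussianReal_real_Ioi_mul_pow_le_pi_positiveNearZero n (by positivity)
  have hM2 : M ^ 2 = 4 * log n * (n : ℝ) ^ (1 / 3 : ℝ) := by
    rw [hM, ht, mul_pow, mul_pow, sq_sqrt hlog, ← rpow_natCast ((n : ℝ) ^ (1 / 6 : ℝ)) 2,
      ← rpow_mul (by positivity)]
    norm_num
  have hlogP := log_le_log (by positivity) hP
  rw [log_div (exp_pos _).ne' (by positivity), log_exp] at hlogP
  nlinarith [sq_nonneg (M - 1)]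

/-- with `a_0, …, a_n` i.i.d. standard normal,
`liminf_{n→∞} (1/√n) log P(f_n(x) > 0 ∀ x ∈ (0, (log n)/(6n))) ≥ 0`. -/
theorem stmt_10 :
    0 ≤ Filter.liminf (fun n : ℕ =>
        Real.log ((Measure.pi fun _ : Fin (n + 1) => gaussianReal 0 1)
            {a : Fin (n + 1) → ℝ | ∀ x : ℝ, 0 < x → x < Real.log n / (6 * n) →
              0 < ∑ i : Fin (n + 1), (n.choose i : ℝ) * a i * x ^ (i : ℕ)}).toReal /
          Real.sqrt n)
      Filter.atTop := by
  set C := log (2 * √(2 * π)) + 1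
  have hlower : Tendsto (fun n : ℕ => -(4 * log n * (n : ℝ) ^ (1 / 3 : ℝ) + C) / √n)
      atTop (𝓝 0) := by
    have h := ((tendsto_log_mul_rpow_add_div_sqrt 4 C).comp tendsto_natCast_atTop_atTop).neg
    rw [neg_zero] at h
    exact h.congr fun n => (neg_div _ _).symm
  have hlim : Tendsto (fun n : ℕ => log ((Measure.pi fun _ : Fin (n + 1) =>
      gaussianReal 0 1).real (positiveNearZero n)) / √n) atTop (𝓝 0) :=
    tendsto_of_tendsto_of_tendsto_of_le_of_le' hlower tendsto_const_nhds
      ((eventually_ge_atTop 2).mono fun n hn =>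
        div_le_div_of_nonneg_right (log_pi_positiveNearZero_ge hn) (sqrt_nonneg _))
      (Eventually.of_forall fun n => div_nonpos_of_nonpos_of_nonneg
        (log_nonpos measureReal_nonneg measureReal_le_one) (sqrt_nonneg _))
  exact hlim.liminf_eq.ge
end

section
/- Let a, b, c be real numbers with a > 0, b ≥ 0, c ≥ 0, and ac ≥ b^2. Then 0 ≤ 1 − (a+b)/√(a(a+2b+c)) ≤ (ac − b^2)/a^2. -/
/-- Let `a, b, c` be real numbers with `a > 0`, `b ≥ 0`, `c ≥ 0` and `a*c ≥ b^2`.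
Then `0 ≤ 1 - (a+b)/√(a*(a+2b+c)) ≤ (a*c - b^2)/a^2`. -/
theorem stmt_12 (a b c : ℝ) (ha : 0 < a) (hb : 0 ≤ b) (hc : 0 ≤ c)
    (habc : b ^ 2 ≤ a * c) :
    0 ≤ 1 - (a + b) / Real.sqrt (a * (a + 2 * b + c)) ∧
      1 - (a + b) / Real.sqrt (a * (a + 2 * b + c)) ≤ (a * c - b ^ 2) / a ^ 2 := by
  set s := Real.sqrt (a * (a + 2 * b + c)) with hs
  have hx : (0:ℝ) ≤ a * (a + 2 * b + c) := by positivity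
  have hs2 : s ^ 2 = a * (a + 2 * b + c) := Real.sq_sqrt hx
  have hge : a + b ≤ s := by
    rw [hs, show a + b = Real.sqrt ((a+b)^2) by rw [Real.sqrt_sq (by linarith)]]
    exact Real.sqrt_le_sqrt (by nlinarith)
  have hspos : 0 < s := by linarith
  constructor
  · have h1 : (a + b) / s ≤ 1 := by
      rw [div_le_one hspos]; exact hge
    linarith
  · rw [show 1 - (a + b) / s = (s - (a + b)) / s by field_simp,
      div_le_div_iff₀ hspos (by positivity)]
    have key : 0 ≤ (s - (a + b)) * ((s + a + b) * s - a ^ 2) :=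
      mul_nonneg (by linarith) (by nlinarith)
    nlinarith [key, hs2]
end

section
/- Let M_n(x) = Σ_{i=0}^n C(n,i)^2 x^{2i} and A_n(x,y) = M_n(√(xy)) / (√(M_n(x)) √(M_n(y))). For real numbers 0 < x < y, setting ε_{1,n}(x,y) = Σ_{i=0}^n C(n,i)^2 x^i (y^i − x^i)/(y − x) and ε̃_{1,n}(x,y) = Σ_{i=0}^n C(n,i)^2 ((y^i − x^i)/(y − x))^2, one has 0 ≤ 1 − A_n(x,y) ≤ (y − x)^2 · (M_n(x) ε̃_{1,n}(x,y) − ε_{1,n}(x,y)^2) / M_n(x)^2. -/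
open Real

/-- The autocorrelation `A_n(x,y) = M_n(√(xy))/(√(M_n(x)) √(M_n(y)))`. -/
noncomputable def Acorr (n : ℕ) (x y : ℝ) : ℝ :=
  Mpoly n (Real.sqrt (x * y)) / (Real.sqrt (Mpoly n x) * Real.sqrt (Mpoly n y))

/-!
With weights `C(n,i)²`, the values `M_n(x)`, `M_n(y)`, `M_n(√(xy))` are the weighted sums
`P = Σ a²`, `Q = Σ b²`, `c = Σ a b` of `a_i = x^i`, `b_i = y^i`, so
`1 - A_n(x,y) = (PQ - c²) / (√(PQ) (√(PQ) + c))`. The numerator is the Gram determinant of `a, b`,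
which is `(y - x)²` times the Gram determinant of `a, (b - a)/(y - x)`: this gives the `ε`-sums.
Since `a_i ≤ b_i`, `P ≤ c ≤ √(PQ)`, so the denominator is at least `P²`.
-/

namespace Finset

variable {ι : Type*} (s : Finset ι) (w a b : ι → ℝ)

theorem sq_sum_mul_mul_le (hw : ∀ i ∈ s, 0 ≤ w i) :
    (∑ i ∈ s, w i * a i * b i) ^ 2 ≤ (∑ i ∈ s, w i * a i ^ 2) * ∑ i ∈ s, w i * b i ^ 2 :=
  sum_sq_le_sum_mul_sum_of_sq_le_mul s
    (fun i hi => mul_nonneg (hw i hi) (sq_nonneg _))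
    (fun i hi => mul_nonneg (hw i hi) (sq_nonneg _)) (fun i _ => le_of_eq (by ring))

theorem sq_mul_gram_sub_div_eq_gram {d : ℝ} (hd : d ≠ 0) :
    d ^ 2 * ((∑ i ∈ s, w i * a i ^ 2) * (∑ i ∈ s, w i * ((b i - a i) / d) ^ 2) -
        (∑ i ∈ s, w i * a i * ((b i - a i) / d)) ^ 2) =
      (∑ i ∈ s, w i * a i ^ 2) * (∑ i ∈ s, w i * b i ^ 2) - (∑ i ∈ s, w i * a i * b i) ^ 2 := by
  have h_sq : ∑ i ∈ s, w i * ((b i - a i) / d) ^ 2 =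
      ((∑ i ∈ s, w i * b i ^ 2) - 2 * ∑ i ∈ s, w i * a i * b i + ∑ i ∈ s, w i * a i ^ 2) / d ^ 2 := by
    rw [mul_sum, ← sum_sub_distrib, ← sum_add_distrib, sum_div]
    exact sum_congr rfl fun i _ => by field_simp; ring
  have h_mul : ∑ i ∈ s, w i * a i * ((b i - a i) / d) =
      ((∑ i ∈ s, w i * a i * b i) - ∑ i ∈ s, w i * a i ^ 2) / d := by
    rw [← sum_sub_distrib, sum_div]
    exact sum_congr rfl fun i _ => by field_simp
  rw [h_sq, h_mul]
  field_simp
  ring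

end Finset

theorem one_sub_div_sqrt_le {p c q : ℝ} (hp : 0 < p) (hpc : p ≤ c) (hcq : c ^ 2 ≤ q) :
    1 - c / √q ≤ (q - c ^ 2) / p ^ 2 := by
  have hc : 0 < c := hp.trans_le hpc
  have hcs : c ≤ √q := (le_sqrt' hc).2 hcq
  have hs : 0 < √q := hc.trans_le hcs
  have hq : √q ^ 2 = q := sq_sqrt (by nlinarith)
  have h_denom : p ^ 2 ≤ √q * (√q + c) := by nlinarith
  calc 1 - c / √q = (q - c ^ 2) / (√q * (√q + c)) := by field_simp; linear_combination hq
    _ ≤ (q - c ^ 2) / p ^ 2 := div_le_div_of_nonneg_left (by linarith) (by positivity) h_denom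

section Mpoly

variable (n : ℕ)

theorem Mpoly_eq_sum_sq (x : ℝ) :
    Mpoly n x = ∑ i ∈ Finset.range (n + 1), (n.choose i : ℝ) ^ 2 * (x ^ i) ^ 2 := by
  simp only [Mpoly, ← pow_mul']

theorem Mpoly_sqrt_mul {x y : ℝ} (hxy : 0 ≤ x * y) :
    Mpoly n √(x * y) = ∑ i ∈ Finset.range (n + 1), (n.choose i : ℝ) ^ 2 * x ^ i * y ^ i := by
  simp only [Mpoly, pow_mul, sq_sqrt hxy, mul_pow, mul_assoc]

theorem one_le_Mpoly (x : ℝ) : 1 ≤ Mpoly n x := by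
  rw [Mpoly_eq_sum_sq]
  calc (1 : ℝ) = (n.choose 0 : ℝ) ^ 2 * (x ^ 0) ^ 2 := by simp
    _ ≤ _ := Finset.single_le_sum (f := fun i => (n.choose i : ℝ) ^ 2 * (x ^ i) ^ 2)
        (fun i _ => by positivity) (by simp)

theorem Mpoly_monotoneOn : MonotoneOn (Mpoly n) (Set.Ici 0) := fun x hx y _ hxy => by
  simp only [Mpoly_eq_sum_sq]
  gcongr
  exact pow_nonneg hx i

theorem sq_Mpoly_sqrt_mul_le {x y : ℝ} (hxy : 0 ≤ x * y) :
    Mpoly n √(x * y) ^ 2 ≤ Mpoly n x * Mpoly n y := by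
  simp only [Mpoly_sqrt_mul n hxy, Mpoly_eq_sum_sq]
  exact Finset.sq_sum_mul_mul_le _ _ _ _ fun i _ => by positivity

end Mpoly

/-- for `0 < x < y`,
`0 ≤ 1 - A_n(x,y) ≤ (y-x)^2 (M_n(x) ε̃_{1,n}(x,y) - ε_{1,n}(x,y)^2)/M_n(x)^2`. -/
theorem stmt_14 (n : ℕ) (x y : ℝ) (hx : 0 < x) (hxy : x < y) :
    0 ≤ 1 - Acorr n x y ∧
      1 - Acorr n x y ≤
        (y - x) ^ 2 *
          (Mpoly n x *
              (∑ i ∈ Finset.range (n + 1),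
                (n.choose i : ℝ) ^ 2 * ((y ^ i - x ^ i) / (y - x)) ^ 2) -
            (∑ i ∈ Finset.range (n + 1),
                (n.choose i : ℝ) ^ 2 * x ^ i * ((y ^ i - x ^ i) / (y - x))) ^ 2) /
          Mpoly n x ^ 2 := by
  have hxy0 : 0 ≤ x * y := by nlinarith
  have h_gram := Finset.sq_mul_gram_sub_div_eq_gram (Finset.range (n + 1))
    (fun i => (n.choose i : ℝ) ^ 2) (fun i => x ^ i) (fun i => y ^ i) (sub_ne_zero.2 hxy.ne')
  rw [← Mpoly_eq_sum_sq, ← Mpoly_eq_sum_sq, ← Mpoly_sqrt_mul n hxy0] at h_gram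
  have hP0 : 0 < Mpoly n x := zero_lt_one.trans_le (one_le_Mpoly n x)
  have hx_le : x ≤ √(x * y) := le_sqrt_of_sq_le (by nlinarith)
  have hPc : Mpoly n x ≤ Mpoly n √(x * y) :=
    Mpoly_monotoneOn n hx.le (hx.le.trans hx_le) hx_le
  have hcq := sq_Mpoly_sqrt_mul_le n hxy0
  rw [Acorr, ← sqrt_mul hP0.le, h_gram]
  exact ⟨sub_nonneg.2 (div_le_one_of_le₀ ((le_sqrt' (hP0.trans_le hPc)).2 hcq) (sqrt_nonneg _)),
    one_sub_div_sqrt_le hP0 hPc hcq⟩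
end

section
/- Let M_n(x) = Σ_{i=0}^n C(n,i)^2 x^{2i} and A_n(x,y) = M_n(√(xy)) / (√(M_n(x)) √(M_n(y))). For every δ ∈ (0, 1/2] there exists N such that for all n ≥ N, all u ∈ (0,1) with n ≤ u^{−δ}, and all real x, y with n^{−1/6} ≤ x ≤ y ≤ n^{1/6} and y − x ≤ u, one has 0 ≤ 1 − A_n(x,y) ≤ u^2 n^2 / x^2. -/
open Real

/-- Lagrange's identity for finite sums. -/
lemma lagrange_aux (s : Finset ℕ) (a b : ℕ → ℝ) :
    2 * ((∑ i ∈ s, a i ^ 2) * (∑ i ∈ s, b i ^ 2) - (∑ i ∈ s, a i * b i) ^ 2)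
      = ∑ i ∈ s, ∑ j ∈ s, (a i * b j - a j * b i) ^ 2 := by
  have key : ∀ i j : ℕ, (a i * b j - a j * b i) ^ 2
      = a i ^ 2 * b j ^ 2 + a j ^ 2 * b i ^ 2 - 2 * ((a i * b i) * (a j * b j)) := by
    intro i j; ring
  simp_rw [key, Finset.sum_sub_distrib, Finset.sum_add_distrib]
  have h1 : ∑ i ∈ s, ∑ j ∈ s, a i ^ 2 * b j ^ 2
      = (∑ i ∈ s, a i ^ 2) * (∑ j ∈ s, b j ^ 2) := (Finset.sum_mul_sum _ _ _ _).symm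
  have h2 : ∑ i ∈ s, ∑ j ∈ s, a j ^ 2 * b i ^ 2
      = (∑ j ∈ s, a j ^ 2) * (∑ i ∈ s, b i ^ 2) := by
    rw [Finset.sum_comm]
    exact (Finset.sum_mul_sum _ _ _ _).symm
  have h3 : ∑ i ∈ s, ∑ j ∈ s, 2 * ((a i * b i) * (a j * b j))
      = 2 * ((∑ i ∈ s, a i * b i) * (∑ j ∈ s, a j * b j)) := by
    simp_rw [← Finset.mul_sum, ← Finset.sum_mul]
  rw [h1, h2, h3]; ring

lemma term_bound {x y u : ℝ} (hx : 0 < x) (hxy : x ≤ y) (hu : 0 ≤ u) (hyx : y - x ≤ u)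
    {n i j : ℕ} (hij : i ≤ j) (hj : j ≤ n) :
    (x ^ i * y ^ j - x ^ j * y ^ i) ^ 2
      ≤ u ^ 2 * (n : ℝ) ^ 2 / x ^ 2 * (x ^ (2 * i) * y ^ (2 * j)) := by
  have hy : 0 < y := hx.trans_le hxy
  obtain ⟨k, rfl⟩ := Nat.exists_eq_add_of_le hij
  rcases Nat.eq_zero_or_pos k with hk | hk
  · subst hk
    simp only [Nat.add_zero, sub_self, ne_eq, OfNat.ofNat_ne_zero, not_false_eq_true, zero_pow]
    positivity
  · have hkn : (k : ℝ) ≤ (n : ℝ) := by exact_mod_cast le_trans (Nat.le_add_left k i) hj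
    have hgeom : y ^ k - x ^ k ≤ u * k * y ^ (k - 1) := by
      rw [← geom_sum₂_mul y x k]
      have hb : ∑ m ∈ Finset.range k, y ^ m * x ^ (k - 1 - m) ≤ k * y ^ (k - 1) := by
        calc ∑ m ∈ Finset.range k, y ^ m * x ^ (k - 1 - m)
            ≤ ∑ m ∈ Finset.range k, y ^ (k - 1) := by
              apply Finset.sum_le_sum
              intro m hm
              have hm' : m ≤ k - 1 := Nat.le_sub_one_of_lt (Finset.mem_range.mp hm)
              calc y ^ m * x ^ (k - 1 - m) ≤ y ^ m * y ^ (k - 1 - m) := by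
                    gcongr
                _ = y ^ (k - 1) := by rw [← pow_add]; congr 1; omega
          _ = k * y ^ (k - 1) := by rw [Finset.sum_const, Finset.card_range, nsmul_eq_mul]
      calc (∑ m ∈ Finset.range k, y ^ m * x ^ (k - 1 - m)) * (y - x)
          ≤ (k * y ^ (k - 1)) * u := by
            apply mul_le_mul hb hyx (by linarith) (by positivity)
        _ = u * k * y ^ (k - 1) := by ring
    have h0 : 0 ≤ y ^ k - x ^ k := by
      have := pow_le_pow_left₀ hx.le hxy k
      linarith
    have hsq : (y ^ k - x ^ k) ^ 2 ≤ u ^ 2 * (n : ℝ) ^ 2 * (y ^ (k - 1)) ^ 2 := by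
      have h1 : (y ^ k - x ^ k) ^ 2 ≤ (u * k * y ^ (k - 1)) ^ 2 :=
        pow_le_pow_left₀ h0 hgeom 2
      calc (y ^ k - x ^ k) ^ 2 ≤ (u * k * y ^ (k - 1)) ^ 2 := h1
        _ = u ^ 2 * (k : ℝ) ^ 2 * (y ^ (k - 1)) ^ 2 := by ring
        _ ≤ u ^ 2 * (n : ℝ) ^ 2 * (y ^ (k - 1)) ^ 2 := by
            have : (k:ℝ)^2 ≤ (n:ℝ)^2 := by
              apply pow_le_pow_left₀ (Nat.cast_nonneg k) hkn
            nlinarith [sq_nonneg u, sq_nonneg (y ^ (k-1)), sq_nonneg (u * y^(k-1))]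
    have hfac : x ^ i * y ^ (i + k) - x ^ (i + k) * y ^ i
        = x ^ i * y ^ i * (y ^ k - x ^ k) := by
      rw [pow_add, pow_add]; ring
    rw [hfac, div_mul_eq_mul_div, le_div_iff₀ (by positivity : (0:ℝ) < x ^ 2)]
    have e2 : y ^ (2 * (i + k)) = (y ^ i) ^ 2 * (y ^ (k - 1)) ^ 2 * y ^ 2 := by
      rw [← pow_mul, ← pow_mul, ← pow_add, ← pow_add]
      congr 1; omega
    have e1 : x ^ (2 * i) = (x ^ i) ^ 2 := by rw [pow_mul']
    rw [e1, e2]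
    have h2 : (y ^ k - x ^ k) ^ 2 * x ^ 2
        ≤ (u ^ 2 * (n : ℝ) ^ 2 * (y ^ (k - 1)) ^ 2) * y ^ 2 := by
      apply mul_le_mul hsq (pow_le_pow_left₀ hx.le hxy 2) (by positivity) (by positivity)
    calc (x ^ i * y ^ i * (y ^ k - x ^ k)) ^ 2 * x ^ 2
        = (x ^ i) ^ 2 * (y ^ i) ^ 2 * ((y ^ k - x ^ k) ^ 2 * x ^ 2) := by ring
      _ ≤ (x ^ i) ^ 2 * (y ^ i) ^ 2 * ((u ^ 2 * (n : ℝ) ^ 2 * (y ^ (k - 1)) ^ 2) * y ^ 2) := by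
          have hnn : (0:ℝ) ≤ (x ^ i) ^ 2 * (y ^ i) ^ 2 := by positivity
          exact mul_le_mul_of_nonneg_left h2 hnn
      _ = u ^ 2 * (n : ℝ) ^ 2 * ((x ^ i) ^ 2 * ((y ^ i) ^ 2 * (y ^ (k - 1)) ^ 2 * y ^ 2)) := by
          ring

/-- for every `δ ∈ (0, 1/2]` there is `N` such that for `n ≥ N`,
`u ∈ (0,1)` with `n ≤ u^{-δ}`, and `n^{-1/6} ≤ x ≤ y ≤ n^{1/6}` with `y - x ≤ u`,
`0 ≤ 1 - A_n(x,y) ≤ u^2 n^2/x^2`. -/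
theorem stmt_15 (δ : ℝ) (hδ0 : 0 < δ) (hδ : δ ≤ 1 / 2) :
    ∃ N : ℕ, ∀ n : ℕ, N ≤ n → ∀ u : ℝ, 0 < u → u < 1 → (n : ℝ) ≤ u ^ (-δ) →
      ∀ x y : ℝ, (n : ℝ) ^ (-(1 : ℝ) / 6) ≤ x → x ≤ y → y ≤ (n : ℝ) ^ ((1 : ℝ) / 6) →
        y - x ≤ u →
        0 ≤ 1 - Acorr n x y ∧ 1 - Acorr n x y ≤ u ^ 2 * (n : ℝ) ^ 2 / x ^ 2 := by
  refine ⟨1, ?_⟩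
  intro n hn u hu0 hu1 _ x y hx hxy hy' hyx
  have hn1 : (1 : ℝ) ≤ (n : ℝ) := by exact_mod_cast hn
  have hnpos : (0 : ℝ) < n := by linarith
  have hx0 : 0 < x := lt_of_lt_of_le (Real.rpow_pos_of_pos hnpos _) hx
  have hy0 : 0 < y := hx0.trans_le hxy
  set s := Finset.range (n + 1) with hs
  set a : ℕ → ℝ := fun i => (n.choose i : ℝ) * x ^ i with ha
  set b : ℕ → ℝ := fun i => (n.choose i : ℝ) * y ^ i with hb
  set K : ℝ := u ^ 2 * (n : ℝ) ^ 2 / x ^ 2 with hK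
  have hK0 : 0 ≤ K := by positivity
  have hP : Mpoly n x = ∑ i ∈ s, a i ^ 2 := by
    unfold Mpoly
    apply Finset.sum_congr rfl
    intro i _
    rw [ha]; simp only []
    rw [mul_pow, pow_mul']
  have hQ : Mpoly n y = ∑ i ∈ s, b i ^ 2 := by
    unfold Mpoly
    apply Finset.sum_congr rfl
    intro i _
    rw [hb]; simp only []
    rw [mul_pow, pow_mul']
  have hR : Mpoly n (Real.sqrt (x * y)) = ∑ i ∈ s, a i * b i := by
    unfold Mpoly
    apply Finset.sum_congr rfl
    intro i _
    rw [pow_mul, Real.sq_sqrt (by positivity : (0:ℝ) ≤ x * y), mul_pow]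
    rw [ha, hb]; ring
  set P : ℝ := ∑ i ∈ s, a i ^ 2 with hPdef
  set Q : ℝ := ∑ i ∈ s, b i ^ 2 with hQdef
  set R : ℝ := ∑ i ∈ s, a i * b i with hRdef
  have hP1 : (1 : ℝ) ≤ P := by
    have h0 : (0 : ℕ) ∈ s := Finset.mem_range.mpr (Nat.succ_pos n)
    have := Finset.single_le_sum (f := fun i => a i ^ 2)
      (fun i _ => sq_nonneg _) h0
    simpa [ha] using this
  have hQ1 : (1 : ℝ) ≤ Q := by
    have h0 : (0 : ℕ) ∈ s := Finset.mem_range.mpr (Nat.succ_pos n)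
    have := Finset.single_le_sum (f := fun i => b i ^ 2)
      (fun i _ => sq_nonneg _) h0
    simpa [hb] using this
  have hPpos : 0 < P := by linarith
  have hQpos : 0 < Q := by linarith
  have hR0 : 0 ≤ R := Finset.sum_nonneg fun i _ => by
    rw [ha, hb]
    positivity
  have hCS : R ^ 2 ≤ P * Q := Finset.sum_mul_sq_le_sq_mul_sq s a b
  -- the double-sum bound
  have hpair : ∀ i ∈ s, ∀ j ∈ s, (a i * b j - a j * b i) ^ 2
      ≤ K * (a i ^ 2 * b j ^ 2) + K * (a j ^ 2 * b i ^ 2) := by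
    intro i hi j hj
    have hi' : i ≤ n := Nat.lt_succ_iff.mp (Finset.mem_range.mp hi)
    have hj' : j ≤ n := Nat.lt_succ_iff.mp (Finset.mem_range.mp hj)
    have habs : ∀ p q : ℕ, a p * b q - a q * b p
        = (n.choose p : ℝ) * (n.choose q : ℝ) * (x ^ p * y ^ q - x ^ q * y ^ p) := by
      intro p q; rw [ha, hb]; ring
    have hsq2 : ∀ p q : ℕ, a p ^ 2 * b q ^ 2
        = ((n.choose p : ℝ) * (n.choose q : ℝ)) ^ 2 * (x ^ (2 * p) * y ^ (2 * q)) := by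
      intro p q; rw [ha, hb]; simp only []
      rw [pow_mul', pow_mul']; ring
    rcases le_total i j with h | h
    · have hb1 := term_bound hx0 hxy hu0.le hyx h hj'
      have : (a i * b j - a j * b i) ^ 2 ≤ K * (a i ^ 2 * b j ^ 2) := by
        rw [habs i j, hsq2 i j, mul_pow]
        calc ((n.choose i : ℝ) * (n.choose j : ℝ)) ^ 2 * (x ^ i * y ^ j - x ^ j * y ^ i) ^ 2
            ≤ ((n.choose i : ℝ) * (n.choose j : ℝ)) ^ 2 * (K * (x ^ (2 * i) * y ^ (2 * j))) :=
              mul_le_mul_of_nonneg_left hb1 (by positivity)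
          _ = K * (((n.choose i : ℝ) * (n.choose j : ℝ)) ^ 2 * (x ^ (2 * i) * y ^ (2 * j))) := by
              ring
      have hpos : 0 ≤ K * (a j ^ 2 * b i ^ 2) := by positivity
      linarith
    · have hb1 := term_bound hx0 hxy hu0.le hyx h hi'
      have : (a i * b j - a j * b i) ^ 2 ≤ K * (a j ^ 2 * b i ^ 2) := by
        have hswap : (a i * b j - a j * b i) ^ 2 = (a j * b i - a i * b j) ^ 2 := by ring
        rw [hswap, habs j i, hsq2 j i, mul_pow]
        calc ((n.choose j : ℝ) * (n.choose i : ℝ)) ^ 2 * (x ^ j * y ^ i - x ^ i * y ^ j) ^ 2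
            ≤ ((n.choose j : ℝ) * (n.choose i : ℝ)) ^ 2 * (K * (x ^ (2 * j) * y ^ (2 * i))) :=
              mul_le_mul_of_nonneg_left hb1 (by positivity)
          _ = K * (((n.choose j : ℝ) * (n.choose i : ℝ)) ^ 2 * (x ^ (2 * j) * y ^ (2 * i))) := by
              ring
      have hpos : 0 ≤ K * (a i ^ 2 * b j ^ 2) := by positivity
      linarith
  have hsumbound : ∑ i ∈ s, ∑ j ∈ s, (a i * b j - a j * b i) ^ 2 ≤ 2 * K * (P * Q) := by
    calc ∑ i ∈ s, ∑ j ∈ s, (a i * b j - a j * b i) ^ 2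
        ≤ ∑ i ∈ s, ∑ j ∈ s, (K * (a i ^ 2 * b j ^ 2) + K * (a j ^ 2 * b i ^ 2)) := by
          apply Finset.sum_le_sum
          intro i hi
          apply Finset.sum_le_sum
          intro j hj
          exact hpair i hi j hj
      _ = 2 * K * (P * Q) := by
          have h1 : ∑ i ∈ s, ∑ j ∈ s, a i ^ 2 * b j ^ 2 = P * Q :=
            (Finset.sum_mul_sum _ _ _ _).symm
          have h2 : ∑ i ∈ s, ∑ j ∈ s, a j ^ 2 * b i ^ 2 = P * Q := by
            rw [Finset.sum_comm]
            exact (Finset.sum_mul_sum _ _ _ _).symm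
          simp_rw [← mul_add]
          simp_rw [← Finset.mul_sum]
          simp_rw [Finset.sum_add_distrib]
          rw [h1, h2]
          ring
  have hLag := lagrange_aux s a b
  have hMain : P * Q - R ^ 2 ≤ K * (P * Q) := by
    rw [← hPdef, ← hQdef, ← hRdef] at hLag
    linarith [hsumbound, hLag]
  -- assemble
  have hAcorr : Acorr n x y = R / (Real.sqrt P * Real.sqrt Q) := by
    unfold Acorr
    rw [hP, hQ, hR]
  set D : ℝ := Real.sqrt P * Real.sqrt Q with hD
  have hDpos : 0 < D := mul_pos (Real.sqrt_pos.mpr hPpos) (Real.sqrt_pos.mpr hQpos)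
  have hD2 : D ^ 2 = P * Q := by
    rw [hD, mul_pow, Real.sq_sqrt hPpos.le, Real.sq_sqrt hQpos.le]
  clear_value K P Q R D
  have hRD : R ≤ D := by
    nlinarith [hCS, hD2, hR0, hDpos]
  have hA1 : R / D ≤ 1 := (div_le_one hDpos).mpr hRD
  have hA0 : 0 ≤ R / D := div_nonneg hR0 hDpos.le
  have hA2 : 1 - (R / D) ^ 2 ≤ K := by
    have hpq : 0 < P * Q := mul_pos hPpos hQpos
    have heq : (P * Q - R ^ 2) / (P * Q) = 1 - R ^ 2 / (P * Q) := by
      rw [sub_div, div_self hpq.ne']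
    rw [div_pow, hD2, ← heq, div_le_iff₀ hpq]
    exact hMain
  rw [hAcorr]
  constructor
  · linarith
  · have hsq : (R / D) ^ 2 ≤ R / D := pow_le_of_le_one hA0 hA1 two_ne_zero
    linarith
end

section
/- Let i_x = ⌊n x/(x+1)⌋. There exists N such that for all n ≥ N, all real x with (log n)/(6n) ≤ x ≤ 1, and every natural number i satisfying either i ≤ i_x − i_x^{3/4} or i_x + i_x^{3/4} ≤ i ≤ 60 i_x, one has C(n,i)^2 x^{2i} ≤ 4π i_x e^{−√(2nx)/16} · C(n,i_x)^2 x^{2 i_x}. -/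
/-!
With `F j = C(n,j) x^j` and `m = i_x`, the ratio `F (j+1) / F j = x (n - j) / (j + 1)` is at most
`1 - k/m` at `j + 1 = m - k` and at most `1 - k/(m+2+k)` at `j = m + 1 + k`. Multiplying these
ratios, `F` decays like a Gaussian away from its mode `m`: `F (m - K) ≤ F m e^{-K(K-1)/(2m)}` and
`F (m + 1 + K) ≤ 2 F m e^{-K(K-1)/(4(m+2))}`. At distance `K ≈ m^{3/4}` both exponents exceed
`3√m/32`, while `√(2nx) ≤ 3√m` and `4πm ≥ 4`.
-/

open Real

lemma le_mul_exp_neg_of_succ_le_mul_exp {g : ℕ → ℝ} {c : ℝ} {K : ℕ}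
    (h : ∀ k < K, g (k + 1) ≤ g k * exp (-(c * k))) :
    g K ≤ g 0 * exp (-(c * (K * (K - 1) / 2))) := by
  induction K with
  | zero => simp
  | succ K ih =>
    calc g (K + 1) ≤ g K * exp (-(c * K)) := h K K.lt_succ_self
      _ ≤ g 0 * exp (-(c * (K * (K - 1) / 2))) * exp (-(c * K)) :=
        mul_le_mul_of_nonneg_right (ih fun k hk => h k (by omega)) (exp_pos _).le
      _ = g 0 * exp (-(c * ((K + 1 : ℕ) * ((K + 1 : ℕ) - 1) / 2))) := by
        rw [mul_assoc, ← exp_add]; push_cast; ring_nf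

lemma le_mul_exp_neg_of_mul_le {u v a b : ℝ} (hv : 0 ≤ v) (hb : 0 < b) (h : u * b ≤ v * a) :
    u ≤ v * exp (-((b - a) / b)) :=
  calc u ≤ v * (1 - (b - a) / b) := by
        rw [one_sub_div hb.ne', sub_sub_cancel, mul_div_assoc', le_div_iff₀ hb]; exact h
    _ ≤ v * exp (-((b - a) / b)) := mul_le_mul_of_nonneg_left (one_sub_le_exp_neg _) hv

noncomputable def binomTerm (n : ℕ) (x : ℝ) (j : ℕ) : ℝ := n.choose j * x ^ j

lemma binomTerm_nonneg {n : ℕ} {x : ℝ} (hx : 0 ≤ x) (j : ℕ) : 0 ≤ binomTerm n x j := by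
  unfold binomTerm; positivity

lemma sq_binomTerm (n : ℕ) (x : ℝ) (j : ℕ) :
    binomTerm n x j ^ 2 = (n.choose j : ℝ) ^ 2 * x ^ (2 * j) := by
  rw [binomTerm, mul_pow, ← pow_mul, mul_comm j]

lemma binomTerm_succ_mul (n : ℕ) (x : ℝ) (j : ℕ) :
    binomTerm n x (j + 1) * (j + 1) = binomTerm n x j * (x * (n - j)) := by
  rcases le_or_gt j n with hj | hj
  · have h := congrArg (Nat.cast : ℕ → ℝ) (Nat.choose_succ_right_eq n j)
    push_cast [Nat.cast_sub hj] at h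
    rw [binomTerm, binomTerm, pow_succ]
    linear_combination x ^ j * x * h
  · simp [binomTerm, Nat.choose_eq_zero_of_lt hj, Nat.choose_eq_zero_of_lt (hj.trans j.lt_succ_self)]

lemma rpow_three_fourths_sq {a : ℝ} (ha : 0 ≤ a) : (a ^ ((3 : ℝ) / 4)) ^ 2 = a * √a := by
  rw [← rpow_mul_natCast ha, sqrt_eq_rpow, ← rpow_one_add' ha (by norm_num)]
  norm_num

section BinomTerm

variable {n m : ℕ} {x : ℝ}

lemma binomTerm_mul_le_of_lt (hx : 0 ≤ x) (hm : (m : ℝ) * (x + 1) ≤ n * x) {j : ℕ} (hj : j < m) :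
    binomTerm n x j * m ≤ binomTerm n x (j + 1) * (j + 1) := by
  rw [binomTerm_succ_mul]
  refine mul_le_mul_of_nonneg_left ?_ (binomTerm_nonneg hx j)
  have : (j : ℝ) ≤ m := by exact_mod_cast hj.le
  nlinarith

lemma binomTerm_succ_mul_le (hx : 0 ≤ x) (hx1 : x ≤ 1) (hm : (n : ℝ) * x < (m + 1) * (x + 1))
    {j : ℕ} (hj : m ≤ j) :
    binomTerm n x (j + 1) * (j + 1) ≤ binomTerm n x j * (m + 2) := by
  rw [binomTerm_succ_mul]
  refine mul_le_mul_of_nonneg_left ?_ (binomTerm_nonneg hx j)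
  have : (m : ℝ) ≤ j := by exact_mod_cast hj
  nlinarith

lemma binomTerm_sub_le (hx : 0 ≤ x) (hm : (m : ℝ) * (x + 1) ≤ n * x) {K : ℕ} (hK : K ≤ m) :
    binomTerm n x (m - K) ≤ binomTerm n x m * exp (-(1 / m * (K * (K - 1) / 2))) := by
  refine le_mul_exp_neg_of_succ_le_mul_exp (g := fun k => binomTerm n x (m - k)) fun k hk => ?_
  have hkm : m - (k + 1) + 1 = m - k := by omega
  have hstep := binomTerm_mul_le_of_lt hx hm (j := m - (k + 1)) (by omega)
  rw [hkm, ← Nat.cast_add_one, hkm, Nat.cast_sub (by omega)] at hstep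
  have hm0 : (0 : ℝ) < m := by exact_mod_cast (show 0 < m by omega)
  convert le_mul_exp_neg_of_mul_le (binomTerm_nonneg hx _) hm0 hstep using 3
  rw [sub_sub_cancel, one_div_mul_eq_div]

lemma binomTerm_le_of_add_le (hx : 0 ≤ x) (hx1 : x ≤ 1)
    (hm : (n : ℝ) * x < (m + 1) * (x + 1)) {K i : ℕ} (hK : K ≤ m + 2) (hi : m + 1 + K ≤ i) :
    binomTerm n x i ≤
      2 * binomTerm n x m * exp (-(1 / (2 * (m + 2)) * (K * (K - 1) / 2))) := by
  have hstep := fun j (hj : m ≤ j) => binomTerm_succ_mul_le hx hx1 hm hj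
  have hanti : AntitoneOn (binomTerm n x) {j | m + 1 ≤ j} := by
    refine antitoneOn_nat_Ici_of_succ_le fun j hj => ?_
    have hjm : (m : ℝ) + 2 ≤ j + 1 := by exact_mod_cast (show m + 2 ≤ j + 1 by omega)
    refine le_of_mul_le_mul_right ?_ (show (0 : ℝ) < j + 1 by positivity)
    exact (hstep j (by omega)).trans (mul_le_mul_of_nonneg_left hjm (binomTerm_nonneg hx j))
  have hfirst : binomTerm n x (m + 1) ≤ 2 * binomTerm n x m := by
    have := hstep m le_rfl
    nlinarith [binomTerm_nonneg hx (n := n) m, binomTerm_nonneg hx (n := n) (m + 1)]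
  have hdecay : binomTerm n x (m + 1 + K) ≤
      binomTerm n x (m + 1) * exp (-(1 / (2 * (m + 2)) * (K * (K - 1) / 2))) := by
    refine le_mul_exp_neg_of_succ_le_mul_exp (g := fun k => binomTerm n x (m + 1 + k))
      fun k hk => ?_
    have h := hstep (m + 1 + k) (by omega)
    push_cast at h
    have hb : (0 : ℝ) < m + 1 + k + 1 := by positivity
    refine (le_mul_exp_neg_of_mul_le (binomTerm_nonneg hx _) hb h).trans
      (mul_le_mul_of_nonneg_left (exp_le_exp.2 (neg_le_neg ?_)) (binomTerm_nonneg hx _))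
    have hk' : (k : ℝ) ≤ m + 2 := by exact_mod_cast hK.trans' hk.le
    rw [show (m : ℝ) + 1 + k + 1 - (m + 2) = k by ring, one_div_mul_eq_div,
      div_le_div_iff₀ (by positivity) hb]
    nlinarith
  calc binomTerm n x i ≤ binomTerm n x (m + 1 + K) :=
        hanti (show m + 1 ≤ m + 1 + K by omega) (show m + 1 ≤ i by omega) hi
    _ ≤ _ := hdecay
    _ ≤ _ := mul_le_mul_of_nonneg_right hfirst (exp_pos _).le

lemma binomTerm_le_of_le_sub_rpow (hx : 0 ≤ x) (hm : (m : ℝ) * (x + 1) ≤ n * x) (hm4 : 4 ≤ m)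
    {i : ℕ} (hi : (i : ℝ) ≤ m - (m : ℝ) ^ ((3 : ℝ) / 4)) :
    binomTerm n x i ≤ binomTerm n x m * exp (-(3 * √m / 32)) := by
  set d := (m : ℝ) ^ ((3 : ℝ) / 4)
  have hd2 : d ^ 2 = m * √m := rpow_three_fourths_sq m.cast_nonneg
  have hd0 : 0 ≤ d := by positivity
  have him : i ≤ m := by exact_mod_cast hi.trans (sub_le_self _ hd0)
  have hs : 2 ≤ √m := le_sqrt_of_sq_le (by exact_mod_cast hm4)
  have hsm : √m ^ 2 = m := sq_sqrt m.cast_nonneg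
  have hK : d ≤ ((m - i : ℕ) : ℝ) := by rw [Nat.cast_sub him]; linarith
  have htail := binomTerm_sub_le hx hm (Nat.sub_le m i)
  rw [Nat.sub_sub_self him] at htail
  refine htail.trans (mul_le_mul_of_nonneg_left (exp_le_exp.2 (neg_le_neg ?_))
    (binomTerm_nonneg hx m))
  set K : ℝ := ((m - i : ℕ) : ℝ)
  set s := √(m : ℝ)
  rw [← hsm] at hd2 ⊢
  have hdm : d ≤ s ^ 2 := by nlinarith
  have hd : 2 ≤ d := by nlinarith
  rw [one_div_mul_eq_div, le_div_iff₀ (by positivity)]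
  nlinarith [mul_nonneg (sub_nonneg.2 hK) (by linarith : 0 ≤ K + d - 1)]

lemma binomTerm_le_of_add_rpow_le (hx : 0 ≤ x) (hx1 : x ≤ 1)
    (hm : (n : ℝ) * x < (m + 1) * (x + 1)) (hm36 : 36 ≤ m) {i : ℕ}
    (hi : (m : ℝ) + (m : ℝ) ^ ((3 : ℝ) / 4) ≤ i) :
    binomTerm n x i ≤ 2 * binomTerm n x m * exp (-(3 * √m / 32)) := by
  set d := (m : ℝ) ^ ((3 : ℝ) / 4)
  have hd2 : d ^ 2 = m * √m := rpow_three_fourths_sq m.cast_nonneg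
  have hd0 : 0 ≤ d := by positivity
  have hs : 6 ≤ √m := le_sqrt_of_sq_le (by exact_mod_cast hm36)
  have hsm : √m ^ 2 = m := sq_sqrt m.cast_nonneg
  set s := √(m : ℝ)
  rw [← hsm] at hd2
  have hdm : d ≤ s ^ 2 := by nlinarith
  have hd : 2 ≤ d := by nlinarith
  have hceil := Nat.ceil_lt_add_one hd0
  have hceil1 : 1 ≤ ⌈d⌉₊ := Nat.one_le_ceil_iff.2 (by linarith)
  have hKi : m + 1 + (⌈d⌉₊ - 1) ≤ i := by
    have : ((m + ⌈d⌉₊ : ℕ) : ℝ) < i + 1 := by push_cast; linarith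
    have : m + ⌈d⌉₊ < i + 1 := by exact_mod_cast this
    omega
  have hKm : ⌈d⌉₊ - 1 ≤ m + 2 := by
    have : (⌈d⌉₊ : ℝ) < m + 1 := by linarith
    have : ⌈d⌉₊ < m + 1 := by exact_mod_cast this
    omega
  refine (binomTerm_le_of_add_le hx hx1 hm hKm hKi).trans
    (mul_le_mul_of_nonneg_left (exp_le_exp.2 (neg_le_neg ?_))
      (mul_nonneg zero_le_two (binomTerm_nonneg hx m)))
  have hK : d - 1 ≤ ((⌈d⌉₊ - 1 : ℕ) : ℝ) := by
    rw [Nat.cast_sub hceil1]; push_cast; linarith [Nat.le_ceil d]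
  set K : ℝ := ((⌈d⌉₊ - 1 : ℕ) : ℝ)
  rw [← hsm, one_div_mul_eq_div, div_div, le_div_iff₀ (by positivity)]
  nlinarith [mul_nonneg (sub_nonneg.2 hK) (by linarith : 0 ≤ K + d - 2)]

end BinomTerm

lemma le_mul_of_exp_le_of_log_div_le {n : ℕ} {x c : ℝ} (hn : exp (6 * c) ≤ n)
    (hx : log n / (6 * n) ≤ x) : c ≤ n * x := by
  have hn0 : (0 : ℝ) < n := (exp_pos _).trans_le hn
  have := (le_log_iff_exp_le hn0).2 hn
  rw [div_le_iff₀ (by positivity)] at hx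
  linarith

section Idx

variable {n : ℕ} {x : ℝ}

lemma idx_mul_le (hx : 0 ≤ x) : (idx n x : ℝ) * (x + 1) ≤ n * x :=
  (le_div_iff₀ (by linarith)).1 (Nat.floor_le (by positivity))

lemma lt_idx_add_one_mul (hx : 0 ≤ x) : (n : ℝ) * x < (idx n x + 1) * (x + 1) :=
  (div_lt_iff₀ (by linarith)).1 (Nat.lt_floor_add_one _)

lemma le_idx_of_two_mul_le (hx : 0 ≤ x) (hx1 : x ≤ 1) {k : ℕ} (hk : 2 * k ≤ (n : ℝ) * x) :
    k ≤ idx n x := by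
  have := lt_idx_add_one_mul (n := n) hx
  have : (k : ℝ) < idx n x + 1 := by nlinarith
  exact Nat.lt_succ_iff.1 (by exact_mod_cast this)

lemma sqrt_two_mul_le_three_mul_sqrt_idx (hx : 0 ≤ x) (hx1 : x ≤ 1) (hm : 1 ≤ idx n x) :
    √(2 * n * x) ≤ 3 * √(idx n x) := by
  have := lt_idx_add_one_mul (n := n) hx
  have hm' : (1 : ℝ) ≤ idx n x := by exact_mod_cast hm
  rw [show 3 * √(idx n x : ℝ) = √(9 * idx n x) by rw [sqrt_mul' _ (Nat.cast_nonneg _)]; norm_num]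
  exact sqrt_le_sqrt (by nlinarith)

end Idx

/-- for `n` large, `(log n)/(6n) ≤ x ≤ 1`, and any `i` with
`i ≤ i_x - i_x^{3/4}` or `i_x + i_x^{3/4} ≤ i ≤ 60 i_x`,
`C(n,i)^2 x^{2i} ≤ 4π i_x e^{-√(2nx)/16} C(n,i_x)^2 x^{2 i_x}`. -/
theorem stmt_17 :
    ∃ N : ℕ, ∀ n : ℕ, N ≤ n → ∀ x : ℝ,
      Real.log n / (6 * n) ≤ x → x ≤ 1 → ∀ i : ℕ,
      ((i : ℝ) ≤ (idx n x : ℝ) - (idx n x : ℝ) ^ ((3 : ℝ) / 4) ∨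
        ((idx n x : ℝ) + (idx n x : ℝ) ^ ((3 : ℝ) / 4) ≤ (i : ℝ) ∧
          (i : ℝ) ≤ 60 * (idx n x : ℝ))) →
      (n.choose i : ℝ) ^ 2 * x ^ (2 * i) ≤
        4 * π * (idx n x : ℝ) * Real.exp (-Real.sqrt (2 * n * x) / 16) *
          ((n.choose (idx n x) : ℝ) ^ 2 * x ^ (2 * idx n x)) := by
  refine ⟨⌈exp (6 * 72)⌉₊, fun n hn x hxl hx1 i hi => ?_⟩
  have hnx : 72 ≤ n * x := le_mul_of_exp_le_of_log_div_le (Nat.ceil_le.1 hn) hxl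
  have hx0 : 0 ≤ x := (pos_of_mul_pos_right (by linarith) n.cast_nonneg).le
  have hm36 : 36 ≤ idx n x := le_idx_of_two_mul_le hx0 hx1 (by norm_num; linarith)
  set m := idx n x
  have hF : binomTerm n x i ≤ 2 * binomTerm n x m * exp (-(3 * √m / 32)) := by
    rcases hi with hlow | ⟨hhigh, -⟩
    · refine (binomTerm_le_of_le_sub_rpow hx0 (idx_mul_le hx0) (by omega) hlow).trans ?_
      gcongr
      linarith [binomTerm_nonneg hx0 (n := n) m]
    · exact binomTerm_le_of_add_rpow_le hx0 hx1 (lt_idx_add_one_mul hx0) hm36 hhigh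
  have hπm : 1 ≤ π * m := by nlinarith [pi_gt_three, (show (36 : ℝ) ≤ m by exact_mod_cast hm36)]
  rw [← sq_binomTerm, ← sq_binomTerm]
  calc binomTerm n x i ^ 2 ≤ (2 * binomTerm n x m * exp (-(3 * √m / 32))) ^ 2 :=
        pow_le_pow_left₀ (binomTerm_nonneg hx0 i) hF 2
    _ = 4 * exp (-(3 * √m / 16)) * binomTerm n x m ^ 2 := by
        rw [mul_pow, mul_pow, ← exp_nat_mul]; ring_nf
    _ ≤ 4 * π * m * exp (-√(2 * n * x) / 16) * binomTerm n x m ^ 2 := by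
        gcongr
        · nlinarith
        · linarith [sqrt_two_mul_le_three_mul_sqrt_idx hx0 hx1 (n := n) (by omega)]
end

section
/- Let i_x = ⌊n x/(x+1)⌋. There exist a constant C > 0 and N such that for all n ≥ N and all real x with (log n)/(6n) ≤ x ≤ 1, one has | C(n, i_x)^2 x^{2 i_x} · 2π n x / (x+1)^{2n+2} − 1 | ≤ C / i_x; that is, C(n,i_x)^2 x^{2 i_x} = (1 + O(i_x^{−1})) (x+1)^{2n+2}/(2π n x) uniformly on this range. -/
/-!
With `a = n x / (x + 1)`, `b = n / (x + 1)` (so `a + b = n` and `x = a / b`), `i = ⌊a⌋` and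
`j = n - i`, Stirling's formula `m! = s_m √(2m) (m/e)^m` turns the normalised term into the product
`π s_n² / (s_i² s_j²) · a b / (i j) · ((a/i)^i (b/j)^j)²`. Robbins' bound
`log √π ≤ log s_m ≤ log √π + 1/(12 m)` controls the first factor; since `0 ≤ a - i < 1` and
`i ≤ a ≤ b`, the second factor is `1 + O(1/i)`, and `log t ≤ t - 1`, `1 - 1/t ≤ log t` squeeze
`i log (a/i) + j log (b/j)` between `-2/i` and `0`. Hence the logarithm of the product is `O(1/i)`.
Finally `x ≥ log n / (6 n)` and `x ≤ 1` give `a ≥ n x / 2 ≥ log n / 12`, so `i ≥ 6` for large `n`.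
-/

open Real

open Filter Topology
open scoped Nat

namespace Stirling

theorem stirlingSeq_pos {k : ℕ} (hk : k ≠ 0) : 0 < stirlingSeq k :=
  (sqrt_pos.2 pi_pos).trans_le (sqrt_pi_le_stirlingSeq hk)

theorem log_stirlingSeq_le {k : ℕ} (hk : k ≠ 0) :
    log (stirlingSeq k) ≤ log √π + 1 / (12 * k) := by
  -- by Robbins' bound, `log (stirlingSeq m) - 1 / (12 m)` increases to `log √π`
  let f : ℕ → ℝ := fun m => log (stirlingSeq (m + 1)) - 1 / (12 * (m + 1 : ℕ))
  have hmono : Monotone f := monotone_nat_of_le_succ fun m => by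
    have h := log_stirlingSeq_sdiff_le (m + 1)
    have e : (1 : ℝ) / (12 * (m + 1 : ℕ) * ((m + 1 : ℕ) + 1)) =
        1 / (12 * (m + 1 : ℕ)) - 1 / (12 * (m + 1 + 1 : ℕ)) := by
      push_cast; field_simp; ring
    simp only [f]
    linarith
  have hlim : Tendsto f atTop (𝓝 (log √π - 0)) := by
    refine ((continuousAt_log (by positivity)).tendsto.comp
      (tendsto_stirlingSeq_sqrt_pi.comp (tendsto_add_atTop_nat 1))).sub ?_
    exact tendsto_const_nhds.div_atTop <| Tendsto.const_mul_atTop (by norm_num)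
      (tendsto_natCast_atTop_atTop.comp (tendsto_add_atTop_nat 1))
  obtain ⟨m, rfl⟩ := Nat.exists_eq_succ_of_ne_zero hk
  have := hmono.ge_of_tendsto hlim m
  simp only [f, sub_zero] at this
  linarith

theorem factorial_eq_stirlingSeq_mul {m : ℕ} (hm : m ≠ 0) :
    (m ! : ℝ) = stirlingSeq m * √(2 * m) * (m / exp 1) ^ m := by
  rw [stirlingSeq]
  field_simp

theorem choose_sq_eq_stirlingSeq {i j : ℕ} (hi : i ≠ 0) (hj : j ≠ 0) :
    (((i + j).choose i : ℕ) : ℝ) ^ 2 =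
      stirlingSeq (i + j) ^ 2 / (stirlingSeq i ^ 2 * stirlingSeq j ^ 2) *
        ((i + j : ℕ) / (2 * i * j)) * ((i + j : ℕ) ^ (i + j) / ((i : ℝ) ^ i * (j : ℝ) ^ j)) ^ 2 := by
  rw [Nat.cast_choose ℝ (Nat.le_add_right i j), Nat.add_sub_cancel_left,
    factorial_eq_stirlingSeq_mul (by omega), factorial_eq_stirlingSeq_mul hi,
    factorial_eq_stirlingSeq_mul hj]
  have := stirlingSeq_pos hi
  have := stirlingSeq_pos hj
  have : (0:ℝ) < i := by positivity
  have : (0:ℝ) < j := by positivity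
  simp only [div_pow, mul_pow]
  rw [sq_sqrt (by positivity), sq_sqrt (by positivity), sq_sqrt (by positivity)]
  push_cast
  field_simp
  ring

theorem abs_log_stirlingSeq_ratio_le {i j : ℕ} (hi : i ≠ 0) (hij : i ≤ j) :
    |log (π * stirlingSeq (i + j) ^ 2 / (stirlingSeq i ^ 2 * stirlingSeq j ^ 2))| ≤ 1 / (3 * i) := by
  have hj : j ≠ 0 := by omega
  have hn : i + j ≠ 0 := by omega
  have hne : ∀ {k : ℕ}, k ≠ 0 → stirlingSeq k ≠ 0 := fun hk => (stirlingSeq_pos hk).ne'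
  have hlog : log (π * stirlingSeq (i + j) ^ 2 / (stirlingSeq i ^ 2 * stirlingSeq j ^ 2)) =
      2 * (log (stirlingSeq (i + j)) - log √π) - 2 * (log (stirlingSeq i) - log √π) -
        2 * (log (stirlingSeq j) - log √π) := by
    rw [log_div (by simp [hne hn, pi_ne_zero]) (by simp [hne hi, hne hj]),
      log_mul pi_ne_zero (by simp [hne hn]), log_mul (by simp [hne hi]) (by simp [hne hj]),
      Real.log_pow, Real.log_pow, Real.log_pow, log_sqrt pi_pos.le]
    ring
  have hiR : (0 : ℝ) < i := by positivity
  have hij' : (i : ℝ) ≤ j := by exact_mod_cast hij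
  have hin : (i : ℝ) ≤ (i + j : ℕ) := by exact_mod_cast Nat.le_add_right i j
  have h1 : 1 / (12 * ((i + j : ℕ) : ℝ)) ≤ 1 / (12 * i) := by gcongr
  have h2 : 1 / (12 * (j : ℝ)) ≤ 1 / (12 * i) := by gcongr
  have e : 1 / (3 * (i : ℝ)) = 4 * (1 / (12 * i)) := by field_simp; norm_num
  have := log_stirlingSeq_le hn
  have := log_stirlingSeq_le hi
  have := log_stirlingSeq_le hj
  have := log_le_log (by positivity) (sqrt_pi_le_stirlingSeq hn)
  have := log_le_log (by positivity) (sqrt_pi_le_stirlingSeq hi)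
  have := log_le_log (by positivity) (sqrt_pi_le_stirlingSeq hj)
  have : 0 ≤ 1 / (12 * (i : ℝ)) := by positivity
  rw [hlog, abs_le]
  constructor <;> linarith

end Stirling

open Stirling

theorem choose_sq_mul_pow_div_eq {n i j : ℕ} (hi : i ≠ 0) (hj : j ≠ 0) (hn : i + j = n)
    {x : ℝ} (hx : x + 1 ≠ 0) :
    (n.choose i : ℝ) ^ 2 * x ^ (2 * i) * (2 * π * n * x) / (x + 1) ^ (2 * n + 2) =
      π * stirlingSeq n ^ 2 / (stirlingSeq i ^ 2 * stirlingSeq j ^ 2) *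
        (n * x / (x + 1) * (n / (x + 1)) / (i * j)) *
        ((n * x / (x + 1) / i) ^ i * (n / (x + 1) / j) ^ j) ^ 2 := by
  subst hn
  rw [choose_sq_eq_stirlingSeq hi hj]
  have := stirlingSeq_pos hi
  have := stirlingSeq_pos hj
  have : (0:ℝ) < i := by positivity
  have : (0:ℝ) < j := by positivity
  simp only [div_pow, mul_pow]
  push_cast
  field_simp
  ring

theorem sub_sq_div_le_mul_log_div {a i : ℝ} (ha : 0 < a) (hi : 0 < i) :
    i - i ^ 2 / a ≤ i * log (a / i) := by
  have := one_sub_inv_le_log_of_pos (div_pos ha hi)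
  rw [inv_div] at this
  calc i - i ^ 2 / a = i * (1 - i / a) := by field_simp
    _ ≤ i * log (a / i) := by gcongr

theorem mul_log_div_le_sub {a i : ℝ} (ha : 0 < a) (hi : 0 < i) :
    i * log (a / i) ≤ a - i := by
  calc i * log (a / i) ≤ i * (a / i - 1) := by gcongr; exact log_le_sub_one_of_pos (by positivity)
    _ = a - i := by field_simp

theorem abs_log_div_pow_mul_div_pow_le {a b : ℝ} {i j : ℕ} (hi : 0 < i) (hia : (i : ℝ) ≤ a)
    (hai : a ≤ i + 1) (hib : (i : ℝ) ≤ b) (hsum : a + b = i + j) :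
    |log ((a / i) ^ i * (b / j) ^ j)| ≤ 2 / i := by
  have hiR : (0 : ℝ) < i := by exact_mod_cast hi
  have ha : 0 < a := hiR.trans_le hia
  have hb : 0 < b := hiR.trans_le hib
  have hjR : (0 : ℝ) < j := by linarith
  rw [log_mul (by positivity) (by positivity), Real.log_pow, Real.log_pow, abs_le]
  constructor
  · -- with `δ = a - i = j - b`, the lower bounds `i - i²/a`, `j - j²/b` sum to `-δ² (1/a + 1/b)`
    have e : i - (i : ℝ) ^ 2 / a + (j - (j : ℝ) ^ 2 / b) = -((a - i) ^ 2 / a + (a - i) ^ 2 / b) := by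
      rw [show (j : ℝ) = a + b - i by linarith]
      field_simp
      ring
    have hδ : (a - i) ^ 2 ≤ 1 := by nlinarith
    have h1 : (a - i) ^ 2 / a ≤ 1 / i := div_le_div₀ zero_le_one hδ hiR hia
    have h2 : (a - i) ^ 2 / b ≤ 1 / i := div_le_div₀ zero_le_one hδ hiR hib
    have := sub_sq_div_le_mul_log_div ha hiR
    have := sub_sq_div_le_mul_log_div hb hjR
    have e2 : (2 : ℝ) / i = 1 / i + 1 / i := by ring
    linarith
  · have := mul_log_div_le_sub ha hiR
    have := mul_log_div_le_sub hb hjR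
    have : (0 : ℝ) ≤ 2 / i := by positivity
    linarith

theorem abs_log_mul_div_mul_le {a b : ℝ} {i j : ℕ} (hi : 0 < i) (hia : (i : ℝ) ≤ a)
    (hai : a ≤ i + 1) (hib : (i : ℝ) ≤ b) (hsum : a + b = i + j) :
    |log (a * b / (i * j))| ≤ 1 / i := by
  have hiR : (0 : ℝ) < i := by exact_mod_cast hi
  have hjR : (0 : ℝ) < j := by linarith
  -- as `a + b = i + j`, `a b - i j = (a - i) (b - i)`, which lies between `0` and `j`
  have e : a * b / (i * j) - 1 = (a - i) * (b - i) / (i * j) := by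
    have hj' : (j : ℝ) = a + b - i := by linarith
    rw [hj'] at hjR ⊢
    field_simp
    ring
  have hlo : 0 ≤ (a - i) * (b - i) := by nlinarith
  have hhi : (a - i) * (b - i) ≤ j := by nlinarith
  have h1 : 1 ≤ a * b / (i * j) := by
    have : 0 ≤ (a - i) * (b - i) / (i * j) := by positivity
    linarith
  have h2 : (a - i) * (b - i) / (i * j) ≤ 1 / i := by
    rw [div_le_div_iff₀ (by positivity) hiR]; nlinarith
  rw [abs_of_nonneg (log_nonneg h1)]
  linarith [log_le_sub_one_of_pos (zero_lt_one.trans_le h1)]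

theorem abs_sub_one_le_of_abs_log_le {T u : ℝ} (hT : 0 < T) (h : |log T| ≤ u) (hu : u ≤ 1) :
    |T - 1| ≤ 2 * u := by
  have := abs_exp_sub_one_le (h.trans hu)
  rw [exp_log hT] at this
  linarith

theorem abs_choose_sq_mul_pow_div_sub_one_le {n : ℕ} {x : ℝ} (hx : 0 < x) (hx1 : x ≤ 1)
    (hi : 6 ≤ idx n x) :
    |(n.choose (idx n x) : ℝ) ^ 2 * x ^ (2 * idx n x) * (2 * π * n * x) /
        (x + 1) ^ (2 * n + 2) - 1| ≤ 12 / (idx n x : ℝ) := by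
  set i := idx n x
  set a : ℝ := n * x / (x + 1)
  set b : ℝ := n / (x + 1)
  have hiR : (6 : ℝ) ≤ i := by exact_mod_cast hi
  have hia : (i : ℝ) ≤ a := Nat.floor_le (by positivity)
  have hai : a ≤ i + 1 := (Nat.lt_floor_add_one a).le
  have hsum : a + b = n := by simp only [a, b]; field_simp
  have hab : a ≤ b := by simp only [a, b]; gcongr; nlinarith
  have hin : i ≤ n := by exact_mod_cast (by linarith : (i : ℝ) ≤ n)
  obtain ⟨j, hn⟩ := Nat.exists_eq_add_of_le hin
  have hsum' : a + b = i + j := by rw [hsum, hn]; push_cast; ring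
  have hij : i ≤ j := by exact_mod_cast (by linarith : (i : ℝ) ≤ j)
  rw [choose_sq_mul_pow_div_eq (by omega) (by omega) hn.symm (by positivity)]
  have hF := abs_log_stirlingSeq_ratio_le (by omega) hij
  rw [← hn] at hF
  have hG := abs_log_mul_div_mul_le (by omega) hia hai (by linarith) hsum'
  have hE := abs_log_div_pow_mul_div_pow_le (by omega) hia hai (by linarith) hsum'
  have := stirlingSeq_pos (k := n) (by omega)
  have := stirlingSeq_pos (k := i) (by omega)
  have := stirlingSeq_pos (k := j) (by omega)
  have : (0 : ℝ) < i := by linarith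
  have : (0 : ℝ) < j := by linarith
  have : (0 : ℝ) < n := by linarith
  rw [show (12 : ℝ) / i = 2 * (6 / i) by ring]
  refine abs_sub_one_le_of_abs_log_le (by positivity) ?_ (by rw [div_le_one₀ (by linarith)]; linarith)
  rw [log_mul (by positivity) (by positivity), log_mul (by positivity) (by positivity), Real.log_pow]
  have e : ∀ c : ℝ, c / i = c * (1 / i) := fun c => by ring
  have e3 : 1 / (3 * (i : ℝ)) = 1 / 3 * (1 / i) := by field_simp
  rw [abs_le] at hF hG hE ⊢
  rw [e3] at hF
  rw [e] at hE ⊢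
  have : 0 ≤ 1 / (i : ℝ) := by positivity
  constructor <;> linarith

theorem six_le_idx {n : ℕ} {x : ℝ} (hn : 0 < (n : ℝ)) (hlog : 72 ≤ log n)
    (hx : log n / (6 * n) ≤ x) (hx1 : x ≤ 1) : 6 ≤ idx n x := by
  have hx0 : 0 < x := (div_pos (by linarith) (by positivity)).trans_le hx
  rw [div_le_iff₀ (by positivity)] at hx
  refine Nat.le_floor ?_
  rw [le_div_iff₀ (by linarith)]
  push_cast
  nlinarith

/-- uniformly for `(log n)/(6n) ≤ x ≤ 1`,
`C(n,i_x)^2 x^{2 i_x} = (1 + O(i_x^{-1})) (x+1)^{2n+2}/(2π n x)`. -/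
theorem stmt_19 :
    ∃ C : ℝ, 0 < C ∧ ∃ N : ℕ, ∀ n : ℕ, N ≤ n → ∀ x : ℝ,
      Real.log n / (6 * n) ≤ x → x ≤ 1 →
      |(n.choose (idx n x) : ℝ) ^ 2 * x ^ (2 * idx n x) * (2 * π * n * x) /
            (x + 1) ^ (2 * n + 2) - 1| ≤
        C / (idx n x : ℝ) := by
  refine ⟨12, by norm_num, ⌈exp 72⌉₊, fun n hn x hxl hxu => ?_⟩
  have hexp : exp 72 ≤ n := Nat.ceil_le.1 hn
  have hnR : (0 : ℝ) < n := (exp_pos 72).trans_le hexp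
  have hlog : 72 ≤ log n := (le_log_iff_exp_le hnR).2 hexp
  have hx : 0 < x := (div_pos (by linarith) (by positivity)).trans_le hxl
  exact abs_choose_sq_mul_pow_div_sub_one_le hx hxu (six_le_idx hnR hlog hxl hxu)
end
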